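/- arXiv:2011.01895 — 4 statements merged into one kernel-verified Lean document; each statement's English description precedes it below -/
import Mathlib

section
/- Let F : ℝ^d → ℝ be a linear functional, m : ℝ^d → ℝ a convex function positive on ℝ^d \ {0}, and q : ℝ^d → ℝ a positive definite quadratic form. Fix v, w ∈ ℝ^d \ {0} that are not positive scalar multiples of each other, with F(v) < 0 and F(w) < 0, and let t ∈ (0,1). Then F(tv+(1-t)w)/m(tv+(1-t)w) ≤ max(F(v)/m(v), F(w)/m(w)), and F(tv+(1-t)w)/√q(tv+(1-t)w) < max(F(v)/√q(v), F(w)/√q(w)). -/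
/-!
On the segment from `v` to `w` the numerator `F` is affine, while each denominator is at most
the corresponding convex combination of its endpoint values: `m` by convexity, `√q` by the
triangle inequality. Since the numerators are negative, shrinking the denominator only lowers
the quotient, so the quotient at an interior point is at most the larger endpoint value.
For `√q` the triangle inequality is strict, because equality in Cauchy–Schwarz for the polar
form forces `v` and `w` onto the same ray.
-/

section QuotientOfConvexCombination

variable {a b p r s α β : ℝ}

lemma convexComb_div_le_max_div (ha : a ≤ 0) (hb : b ≤ 0) (hp : 0 < p) (hr : 0 < r)
    (hs : 0 < s) (hα : 0 ≤ α) (hβ : 0 ≤ β) (hsle : s ≤ α * p + β * r) :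
    (α * a + β * b) / s ≤ max (a / p) (b / r) := by
  set M := max (a / p) (b / r)
  have hM : M ≤ 0 := max_le (div_nonpos_of_nonpos_of_nonneg ha hp.le)
    (div_nonpos_of_nonpos_of_nonneg hb hr.le)
  have hap : a ≤ M * p := (div_le_iff₀ hp).1 (le_max_left _ _)
  have hbr : b ≤ M * r := (div_le_iff₀ hr).1 (le_max_right _ _)
  rw [div_le_iff₀ hs]
  calc α * a + β * b ≤ M * (α * p + β * r) := by nlinarith
    _ ≤ M * s := mul_le_mul_of_nonpos_left hsle hM

lemma convexComb_div_lt_max_div (ha : a < 0) (hb : b < 0) (hp : 0 < p) (hr : 0 < r)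
    (hs : 0 < s) (hα : 0 ≤ α) (hβ : 0 ≤ β) (hslt : s < α * p + β * r) :
    (α * a + β * b) / s < max (a / p) (b / r) := by
  set M := max (a / p) (b / r)
  have hM : M < 0 := max_lt (div_neg_of_neg_of_pos ha hp) (div_neg_of_neg_of_pos hb hr)
  have hap : a ≤ M * p := (div_le_iff₀ hp).1 (le_max_left _ _)
  have hbr : b ≤ M * r := (div_le_iff₀ hr).1 (le_max_right _ _)
  rw [div_lt_iff₀ hs]
  calc α * a + β * b ≤ M * (α * p + β * r) := by nlinarith
    _ < M * s := mul_lt_mul_of_neg_left hslt hM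

end QuotientOfConvexCombination

namespace QuadraticMap

variable {E : Type*} [AddCommGroup E] [Module ℝ E] {q : QuadraticForm ℝ E}

lemma map_smul_add_smul (q : QuadraticForm ℝ E) (a b : ℝ) (x y : E) :
    q (a • x + b • y) = a ^ 2 * q x + a * b * polar q x y + b ^ 2 * q y := by
  rw [QuadraticMap.map_add q, QuadraticMap.map_smul, QuadraticMap.map_smul, polar_smul_left,
    polar_smul_right, smul_eq_mul, smul_eq_mul, smul_eq_mul, smul_eq_mul]
  ring

lemma PosDef.sqrt_pos (hq : q.PosDef) {x : E} (hx : x ≠ 0) : 0 < √(q x) :=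
  Real.sqrt_pos.2 (hq x hx)

lemma polar_lt_two_mul_sqrt_mul_sqrt (hq : q.PosDef) {v w : E} (hvw : ¬SameRay ℝ v w) :
    polar q v w < 2 * √(q v) * √(q w) := by
  have ha : 0 < √(q v) := hq.sqrt_pos fun h => hvw (h ▸ SameRay.zero_left w)
  have hb : 0 < √(q w) := hq.sqrt_pos fun h => hvw (h ▸ SameRay.zero_right v)
  have hqv := Real.sq_sqrt (hq.nonneg v)
  have hqw := Real.sq_sqrt (hq.nonneg w)
  set a := √(q v)
  set b := √(q w)
  by_contra! hle
  -- `q (b • v - a • w) = a * b * (2 * a * b - polar q v w)`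
  have hnonpos : q (b • v + (-a) • w) ≤ 0 := by
    rw [map_smul_add_smul, ← hqv, ← hqw]
    nlinarith [mul_le_mul_of_nonneg_left hle (mul_pos ha hb).le]
  rw [hq.le_zero_iff, neg_smul, ← sub_eq_add_neg, sub_eq_zero] at hnonpos
  exact hvw (Or.inr (Or.inr ⟨_, _, hb, ha, hnonpos⟩))

lemma sqrt_map_smul_add_smul_lt (hq : q.PosDef) {v w : E} (hvw : ¬SameRay ℝ v w)
    {α β : ℝ} (hα : 0 < α) (hβ : 0 < β) :
    √(q (α • v + β • w)) < α * √(q v) + β * √(q w) := by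
  have ha : 0 < √(q v) := hq.sqrt_pos fun h => hvw (h ▸ SameRay.zero_left w)
  have hb : 0 < √(q w) := hq.sqrt_pos fun h => hvw (h ▸ SameRay.zero_right v)
  rw [Real.sqrt_lt' (by positivity), map_smul_add_smul, add_sq, mul_pow, mul_pow,
    Real.sq_sqrt (hq.nonneg v), Real.sq_sqrt (hq.nonneg w)]
  nlinarith [polar_lt_two_mul_sqrt_mul_sqrt hq hvw, mul_pos hα hβ]

end QuadraticMap

/-- Quasi-convexity of the stability function (abstracting Proposition 3.4):
`F` is a linear functional (the Futaki invariant), `m` a convex function positive away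
from `0` (the minimum norm), and `q` a positive definite quadratic form (square of the
`L²` norm). -/
theorem stmt0 {d : ℕ} (F : (Fin d → ℝ) →ₗ[ℝ] ℝ) (m : (Fin d → ℝ) → ℝ)
    (hmconv : ConvexOn ℝ Set.univ m) (hmpos : ∀ x : Fin d → ℝ, x ≠ 0 → 0 < m x)
    (q : QuadraticForm ℝ (Fin d → ℝ)) (hqpos : ∀ x : Fin d → ℝ, x ≠ 0 → 0 < q x)
    (v w : Fin d → ℝ) (hv : v ≠ 0) (hw : w ≠ 0)
    (hprop : ¬ ∃ c : ℝ, 0 < c ∧ w = c • v)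
    (hFv : F v < 0) (hFw : F w < 0)
    (t : ℝ) (ht0 : 0 < t) (ht1 : t < 1) :
    F (t • v + (1 - t) • w) / m (t • v + (1 - t) • w) ≤ max (F v / m v) (F w / m w) ∧
    F (t • v + (1 - t) • w) / Real.sqrt (q (t • v + (1 - t) • w)) <
      max (F v / Real.sqrt (q v)) (F w / Real.sqrt (q w)) := by
  have hvw : ¬SameRay ℝ v w := fun h =>
    hprop ((h.exists_pos_left hv hw).imp fun _ ⟨hc, h⟩ => ⟨hc, h.symm⟩)
  have hFu : F (t • v + (1 - t) • w) = t * F v + (1 - t) * F w := by simp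
  have hu : t • v + (1 - t) • w ≠ 0 := by
    intro h
    have : t * F v + (1 - t) * F w < 0 := by nlinarith
    simp [← hFu, h] at this
  rw [hFu]
  constructor
  · exact convexComb_div_le_max_div hFv.le hFw.le (hmpos v hv) (hmpos w hw) (hmpos _ hu)
      ht0.le (by linarith) (hmconv.2 trivial trivial ht0.le (by linarith) (by ring))
  · have hq : q.PosDef := hqpos
    exact convexComb_div_lt_max_div hFv hFw (hq.sqrt_pos hv) (hq.sqrt_pos hw)
      (hq.sqrt_pos hu) ht0.le (by linarith)
      (QuadraticMap.sqrt_map_smul_add_smul_lt hq hvw ht0 (by linarith))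
end

section
/- Let F : ℝ^d → ℝ be a nonzero rational linear functional, m : ℝ^d → ℝ a rational piecewise-linear convex function positive on ℝ^d \ {0}, and σ ⊆ ℝ^d a rational polyhedral cone containing a point where F < 0. Then M := inf { F(v)/m(v) : v ∈ σ \ {0} } is a rational number, M < 0, and the set σ₁ := { v ∈ σ : F(v) - M·m(v) = 0 } of minimizers (as a cone) is a nonempty rational polyhedral cone. -/
set_option linter.unusedSectionVars false
set_option linter.unusedVariables false
set_option linter.unusedTactic false
set_option maxHeartbeats 1000000


/-- A rational polyhedral cone in `ℝ^d`: the cone generated by finitely many rational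
vectors. -/
def IsRationalPolyhedralCone {d : ℕ} (σ : Set (Fin d → ℝ)) : Prop :=
  ∃ S : Finset (Fin d → ℚ),
    σ = { v | ∃ c : (Fin d → ℚ) → ℝ, (∀ g, 0 ≤ c g) ∧
          v = ∑ g ∈ S, c g • (fun i => (g i : ℝ)) }

/-- A rational linear functional on `ℝ^d`. -/
def IsRationalLinear {d : ℕ} (F : (Fin d → ℝ) → ℝ) : Prop :=
  ∃ a : Fin d → ℚ, ∀ v, F v = ∑ i, (a i : ℝ) * v i

/-- A rational piecewise linear function on `ℝ^d`: there is a decomposition of `ℝ^d`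
into finitely many rational polyhedral cones on each of which the function is rational
linear. -/
def IsRationalPiecewiseLinear {d : ℕ} (m : (Fin d → ℝ) → ℝ) : Prop :=
  ∃ (n : ℕ) (σ : Fin n → Set (Fin d → ℝ)) (L : Fin n → (Fin d → ℝ) → ℝ),
    (∀ i, IsRationalPolyhedralCone (σ i)) ∧ (⋃ i, σ i) = Set.univ ∧
    ∀ i, IsRationalLinear (L i) ∧ ∀ v ∈ σ i, m v = L i v

open Finset
set_option linter.unusedSectionVars false
set_option maxHeartbeats 1000000
namespace Stmt2Aux
variable {V : Type} [Fintype V]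
def castQ (g : V → ℚ) : V → ℝ := fun i => (g i : ℝ)
def dotQ (a g : V → ℚ) : ℚ := ∑ i, a i * g i
lemma castQ_zero : castQ (0 : V → ℚ) = 0 := by funext i; simp [castQ]
lemma castQ_add (g h : V → ℚ) : castQ (g + h) = castQ g + castQ h := by funext i; simp [castQ]
lemma castQ_smul (q : ℚ) (g : V → ℚ) : castQ (q • g) = (q : ℝ) • castQ g := by funext i; simp [castQ]
lemma castQ_neg (g : V → ℚ) : castQ (-g) = -castQ g := by funext i; simp [castQ]
lemma dotQ_zero (a : V → ℚ) : dotQ a 0 = 0 := by simp [dotQ]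
lemma dotQ_add (a g h : V → ℚ) : dotQ a (g + h) = dotQ a g + dotQ a h := by
  simp [dotQ, mul_add, Finset.sum_add_distrib]
lemma dotQ_smul (a : V → ℚ) (q : ℚ) (g : V → ℚ) : dotQ a (q • g) = q * dotQ a g := by
  simp [dotQ, Finset.mul_sum]; apply Finset.sum_congr rfl; intros; ring
lemma dotR_castQ (a g : V → ℚ) : ∑ i, (a i : ℝ) * castQ g i = ((dotQ a g : ℚ) : ℝ) := by
  simp [castQ, dotQ]
lemma dotR_finsum {A : Type*} (a : V → ℚ) (s : Finset A) (c : A → ℝ) (x : A → V → ℝ) :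
    ∑ i, (a i : ℝ) * (∑ j ∈ s, c j • x j) i = ∑ j ∈ s, c j * ∑ i, (a i : ℝ) * x j i := by
  simp only [Finset.sum_apply, Pi.smul_apply, smul_eq_mul, Finset.mul_sum]
  rw [Finset.sum_comm]
  apply Finset.sum_congr rfl; intro j _; apply Finset.sum_congr rfl; intro i _; ring
def NCone {ι : Type} [Fintype ι] (g : ι → V → ℚ) : Set (V → ℝ) :=
  {v | ∃ c : ι → ℝ, (∀ j, 0 ≤ c j) ∧ v = ∑ j, c j • castQ (g j)}
def RatCone (σ : Set (V → ℝ)) : Prop :=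
  ∃ (ι : Type) (_ : Fintype ι) (g : ι → V → ℚ), σ = NCone g
variable {ι : Type} [Fintype ι]
lemma NCone.gen_mem (g : ι → V → ℚ) (j : ι) : castQ (g j) ∈ NCone g := by
  classical
  refine ⟨fun k => if k = j then 1 else 0, fun k => by positivity, ?_⟩
  rw [Finset.sum_eq_single j]
  · simp
  · intro k _ hk; simp [hk]
  · simp
lemma NCone.zero_mem (g : ι → V → ℚ) : (0 : V → ℝ) ∈ NCone g :=
  ⟨0, fun j => le_refl _, by simp⟩
lemma NCone.add_mem {g : ι → V → ℚ} {x y : V → ℝ} (hx : x ∈ NCone g) (hy : y ∈ NCone g) :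
    x + y ∈ NCone g := by
  obtain ⟨c, hc, rfl⟩ := hx; obtain ⟨c', hc', rfl⟩ := hy
  exact ⟨c + c', fun j => add_nonneg (hc j) (hc' j), by
    rw [← Finset.sum_add_distrib]; apply Finset.sum_congr rfl; intro j _
    simp [add_smul]⟩
lemma NCone.smul_mem {g : ι → V → ℚ} {x : V → ℝ} {t : ℝ} (ht : 0 ≤ t) (hx : x ∈ NCone g) :
    t • x ∈ NCone g := by
  obtain ⟨c, hc, rfl⟩ := hx
  exact ⟨fun j => t * c j, fun j => mul_nonneg ht (hc j), by
    rw [Finset.smul_sum]; apply Finset.sum_congr rfl; intro j _; rw [smul_smul]⟩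
lemma mem_of_combo {S : Set (V → ℝ)} (h0 : (0 : V → ℝ) ∈ S)
    (hadd : ∀ x ∈ S, ∀ y ∈ S, x + y ∈ S)
    (hsmul : ∀ t : ℝ, 0 ≤ t → ∀ x ∈ S, t • x ∈ S)
    {A : Type*} (s : Finset A) (c : A → ℝ) (x : A → V → ℝ)
    (hc : ∀ a ∈ s, 0 ≤ c a) (hx : ∀ a ∈ s, x a ∈ S) :
    ∑ a ∈ s, c a • x a ∈ S := by
  classical
  induction s using Finset.induction_on with
  | empty => simpa using h0
  | insert b s' hnotmem ih =>
    rw [Finset.sum_insert hnotmem]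
    exact hadd _ (hsmul _ (hc b (by simp)) _ (hx b (by simp))) _
      (ih (fun a ha => hc a (by simp [ha])) (fun a ha => hx a (by simp [ha])))
lemma NCone.combo_mem {g : ι → V → ℚ} {A : Type*} (s : Finset A) (c : A → ℝ) (x : A → V → ℝ)
    (hc : ∀ a ∈ s, 0 ≤ c a) (hx : ∀ a ∈ s, x a ∈ NCone g) :
    ∑ a ∈ s, c a • x a ∈ NCone g :=
  mem_of_combo (NCone.zero_mem g) (fun _ hx' _ hy => NCone.add_mem hx' hy)
    (fun _ ht _ hx' => NCone.smul_mem ht hx') s c x hc hx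

/-- The double description step: cutting a rational cone with a rational halfspace. -/
theorem RatCone.inter_halfspace {σ : Set (V → ℝ)} (hσ : RatCone σ) (a : V → ℚ) :
    RatCone (σ ∩ {v | 0 ≤ ∑ i, (a i : ℝ) * v i}) := by
  classical
  obtain ⟨ι, _, g, rfl⟩ := hσ
  set α : ι → ℚ := fun j => dotQ a (g j) with hα
  set h : ι ⊕ ι × ι → V → ℚ := Sum.elim (fun j => if 0 ≤ α j then g j else 0)
      (fun p => if 0 ≤ α p.1 ∧ α p.2 < 0 then α p.1 • g p.2 + (-(α p.2)) • g p.1 else 0)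
      with hh
  have hdg : ∀ u, 0 ≤ dotQ a (h u) := by
    rintro (j | ⟨j, k⟩)
    · by_cases h0 : 0 ≤ α j <;> simp only [hh, Sum.elim_inl, h0, ↓reduceIte, dotQ_zero, le_refl] <;> exact h0
    · by_cases h0 : 0 ≤ α j ∧ α k < 0
      · simp only [hh, Sum.elim_inr, if_pos h0, dotQ_add, dotQ_smul]
        have : α j * dotQ a (g k) + -α k * dotQ a (g j) = 0 := by
          show α j * α k + -α k * α j = 0; ring
        rw [this]
      · simp [hh, h0, dotQ_zero]
  have hmem : ∀ u, castQ (h u) ∈ NCone g := by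
    rintro (j | ⟨j, k⟩)
    · by_cases h0 : 0 ≤ α j
      · simpa [hh, h0] using NCone.gen_mem g j
      · simp [hh, h0, castQ_zero, NCone.zero_mem]
    · by_cases h0 : 0 ≤ α j ∧ α k < 0
      · simp only [hh, Sum.elim_inr, if_pos h0, castQ_add, castQ_smul]
        exact NCone.add_mem
          (NCone.smul_mem (by exact_mod_cast h0.1) (NCone.gen_mem g k))
          (NCone.smul_mem (by exact_mod_cast neg_nonneg.2 h0.2.le) (NCone.gen_mem g j))
      · simp [hh, h0, castQ_zero, NCone.zero_mem]
  refine ⟨ι ⊕ ι × ι, inferInstance, h, ?_⟩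
  ext v
  constructor
  · rintro ⟨⟨c, hc, rfl⟩, hv⟩
    simp only [Set.mem_setOf_eq] at hv
    rw [dotR_finsum] at hv
    simp only [dotR_castQ] at hv
    set Jp : Finset ι := univ.filter (fun j => 0 ≤ α j) with hJp
    set Jn : Finset ι := univ.filter (fun j => α j < 0) with hJn
    have hfnot : univ.filter (fun j => ¬ 0 ≤ α j) = Jn := by
      apply Finset.filter_congr; intro j _; simp [not_le]
    set A : ℝ := ∑ j ∈ Jp, c j * ((α j : ℚ) : ℝ) with hA
    set B : ℝ := ∑ j ∈ Jn, c j * (-((α j : ℚ) : ℝ)) with hB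
    have hsplit : ∑ j, c j * ((α j : ℚ) : ℝ) = A - B := by
      rw [← Finset.sum_filter_add_sum_filter_not univ (fun j => 0 ≤ α j)
        (fun j => c j * ((α j : ℚ) : ℝ)), hfnot]
      rw [hA, hB, sub_eq_add_neg, ← Finset.sum_neg_distrib]
      congr 1; apply Finset.sum_congr rfl; intros; ring
    have hAnn : 0 ≤ A := Finset.sum_nonneg (fun j hj => by
      have h1 := (Finset.mem_filter.1 hj).2
      exact mul_nonneg (hc j) (by exact_mod_cast h1))
    have hBnn : 0 ≤ B := Finset.sum_nonneg (fun j hj => by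
      have h1 := (Finset.mem_filter.1 hj).2
      exact mul_nonneg (hc j) (by exact_mod_cast neg_nonneg.2 h1.le))
    have hAB : B ≤ A := by rw [hsplit] at hv; linarith
    by_cases hB0 : B = 0
    · have hzero : ∀ j, α j < 0 → c j = 0 := by
        intro j hj
        have hmemj : j ∈ Jn := by simp [hJn, hj]
        have hnn : ∀ k ∈ Jn, 0 ≤ c k * (-((α k : ℚ) : ℝ)) := fun k hk => by
          have hk' := (Finset.mem_filter.1 hk).2
          exact mul_nonneg (hc k) (by exact_mod_cast neg_nonneg.2 hk'.le)
        have hs0 : ∑ k ∈ Jn, c k * (-((α k : ℚ) : ℝ)) = 0 := by rw [← hB]; exact hB0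
        have heach := (Finset.sum_eq_zero_iff_of_nonneg hnn).1 hs0 j hmemj
        have hne : (-((α j : ℚ) : ℝ)) ≠ 0 := ne_of_gt (by exact_mod_cast neg_pos.2 hj)
        exact (mul_eq_zero.1 heach).resolve_right hne
      refine ⟨Sum.elim (fun j => if 0 ≤ α j then c j else 0) 0, ?_, ?_⟩
      · rintro (j | p)
        · by_cases h0 : 0 ≤ α j <;> simp [h0, hc j]
        · simp
      · rw [Fintype.sum_sum_type]
        simp only [Sum.elim_inr, Pi.zero_apply, zero_smul, Finset.sum_const_zero, add_zero,
          Sum.elim_inl]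
        apply Finset.sum_congr rfl
        intro j _
        by_cases h0 : 0 ≤ α j
        · simp [hh, h0]
        · simp [hh, h0, hzero j (not_le.1 h0)]
    · have hBpos : 0 < B := lt_of_le_of_ne hBnn (Ne.symm hB0)
      have hApos : 0 < A := lt_of_lt_of_le hBpos hAB
      have hAne : A ≠ 0 := hApos.ne'
      refine ⟨Sum.elim (fun j => if 0 ≤ α j then c j * ((A - B) / A) else 0)
          (fun p => if 0 ≤ α p.1 ∧ α p.2 < 0 then c p.1 * c p.2 / A else 0), ?_, ?_⟩
      · rintro (j | p)
        · by_cases h0 : 0 ≤ α j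
          · simp only [Sum.elim_inl, if_pos h0]
            exact mul_nonneg (hc j) (div_nonneg (by linarith) hApos.le)
          · simp [h0]
        · by_cases h0 : 0 ≤ α p.1 ∧ α p.2 < 0
          · simp only [Sum.elim_inr, if_pos h0]
            exact div_nonneg (mul_nonneg (hc _) (hc _)) hApos.le
          · simp [h0]
      · rw [Fintype.sum_sum_type]
        have hinl : (∑ j, (if 0 ≤ α j then c j * ((A - B) / A) else 0) • castQ (h (Sum.inl j)))
            = ∑ j ∈ Jp, (c j * ((A - B) / A)) • castQ (g j) := by
          rw [Finset.sum_filter]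
          apply Finset.sum_congr rfl
          intro j _
          by_cases h0 : 0 ≤ α j <;> simp [hh, h0]
        have hinr : (∑ p : ι × ι,
              (if 0 ≤ α p.1 ∧ α p.2 < 0 then c p.1 * c p.2 / A else 0) • castQ (h (Sum.inr p)))
            = ∑ j ∈ Jp, ∑ k ∈ Jn, (c j * c k / A) •
                (((α j : ℚ) : ℝ) • castQ (g k) + (-((α k : ℚ) : ℝ)) • castQ (g j)) := by
          rw [← Finset.sum_product']
          rw [show (Jp ×ˢ Jn) = univ.filter (fun p : ι × ι => 0 ≤ α p.1 ∧ α p.2 < 0) by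
            ext ⟨x, y⟩
            simp [hJp, hJn, Finset.mem_product]]
          rw [Finset.sum_filter]
          apply Finset.sum_congr rfl
          intro p _
          by_cases h0 : 0 ≤ α p.1 ∧ α p.2 < 0
          · simp [hh, h0, castQ_add, castQ_smul, castQ_neg, neg_smul]
          · simp [hh, h0]
        simp only [Sum.elim_inl, Sum.elim_inr]
        rw [hinl, hinr]
        have hexp : ∑ j ∈ Jp, ∑ k ∈ Jn, (c j * c k / A) •
                (((α j : ℚ) : ℝ) • castQ (g k) + (-((α k : ℚ) : ℝ)) • castQ (g j))
            = (∑ j ∈ Jp, ∑ k ∈ Jn, (c j * c k / A * ((α j : ℚ) : ℝ)) • castQ (g k))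
              + (∑ j ∈ Jp, ∑ k ∈ Jn, (c j * c k / A * (-((α k : ℚ) : ℝ))) • castQ (g j)) := by
          rw [← Finset.sum_add_distrib]
          apply Finset.sum_congr rfl; intro j _
          rw [← Finset.sum_add_distrib]
          apply Finset.sum_congr rfl; intro k _
          rw [smul_add, smul_smul, smul_smul]
        rw [hexp]
        have hT1 : (∑ j ∈ Jp, ∑ k ∈ Jn, (c j * c k / A * ((α j : ℚ) : ℝ)) • castQ (g k))
            = ∑ k ∈ Jn, c k • castQ (g k) := by
          rw [Finset.sum_comm]
          apply Finset.sum_congr rfl; intro k _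
          rw [← Finset.sum_smul]
          congr 1
          have : ∑ j ∈ Jp, c j * c k / A * ((α j : ℚ) : ℝ)
              = (∑ j ∈ Jp, c j * ((α j : ℚ) : ℝ)) * (c k / A) := by
            rw [Finset.sum_mul]; apply Finset.sum_congr rfl; intros; ring
          rw [this, ← hA]
          field_simp
        have hT2 : (∑ j ∈ Jp, ∑ k ∈ Jn, (c j * c k / A * (-((α k : ℚ) : ℝ))) • castQ (g j))
            = ∑ j ∈ Jp, (c j * (B / A)) • castQ (g j) := by
          apply Finset.sum_congr rfl; intro j _
          rw [← Finset.sum_smul]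
          congr 1
          have : ∑ k ∈ Jn, c j * c k / A * (-((α k : ℚ) : ℝ))
              = (∑ k ∈ Jn, c k * (-((α k : ℚ) : ℝ))) * (c j / A) := by
            rw [Finset.sum_mul]; apply Finset.sum_congr rfl; intros; ring
          rw [this, ← hB]; ring
        rw [hT1, hT2]
        have hcomb : (∑ j ∈ Jp, (c j * ((A - B) / A)) • castQ (g j))
              + ∑ j ∈ Jp, (c j * (B / A)) • castQ (g j)
            = ∑ j ∈ Jp, c j • castQ (g j) := by
          rw [← Finset.sum_add_distrib]
          apply Finset.sum_congr rfl; intro j _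
          rw [← add_smul]
          congr 1
          field_simp
          ring
        have htotal : (∑ j ∈ Jp, c j • castQ (g j)) + ∑ j ∈ Jn, c j • castQ (g j)
            = ∑ j, c j • castQ (g j) := by
          rw [← hfnot]
          exact Finset.sum_filter_add_sum_filter_not univ (fun j => 0 ≤ α j) _
        rw [← htotal, ← hcomb]
        abel
  · rintro ⟨c, hc, rfl⟩
    constructor
    · exact NCone.combo_mem univ c (fun u => castQ (h u)) (fun u _ => hc u) (fun u _ => hmem u)
    · simp only [Set.mem_setOf_eq]
      rw [dotR_finsum]
      simp only [dotR_castQ]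
      exact Finset.sum_nonneg (fun u _ => mul_nonneg (hc u) (by exact_mod_cast hdg u))


/-- cutting with a rational hyperplane -/
theorem RatCone.inter_hyperplane {σ : Set (V → ℝ)} (hσ : RatCone σ) (a : V → ℚ) :
    RatCone (σ ∩ {v | ∑ i, (a i : ℝ) * v i = 0}) := by
  have h2 := (hσ.inter_halfspace a).inter_halfspace (-a)
  have : (σ ∩ {v | 0 ≤ ∑ i, (a i : ℝ) * v i}) ∩ {v | 0 ≤ ∑ i, ((-a) i : ℝ) * v i}
      = σ ∩ {v | ∑ i, (a i : ℝ) * v i = 0} := by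
    ext v
    have hneg : ∑ i, ((-a) i : ℝ) * v i = -∑ i, (a i : ℝ) * v i := by
      rw [← Finset.sum_neg_distrib]
      apply Finset.sum_congr rfl; intros; rw [Pi.neg_apply]; push_cast; ring
    simp only [Set.mem_inter_iff, Set.mem_setOf_eq, hneg]
    constructor
    · rintro ⟨⟨h1, h2⟩, h3⟩; exact ⟨h1, le_antisymm (by linarith) h2⟩
    · rintro ⟨h1, h2⟩; exact ⟨⟨h1, h2.ge⟩, by rw [h2]; simp⟩
  rwa [this] at h2

/-- cutting with finitely many rational hyperplanes -/
theorem RatCone.inter_eqs {W : Type} [Fintype W] {σ : Set (V → ℝ)} (hσ : RatCone σ)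
    (A : W → V → ℚ) :
    RatCone (σ ∩ {v | ∀ w, ∑ i, (A w i : ℝ) * v i = 0}) := by
  classical
  have key : ∀ E : Finset W, RatCone (σ ∩ {v | ∀ w ∈ E, ∑ i, (A w i : ℝ) * v i = 0}) := by
    intro E
    induction E using Finset.induction_on with
    | empty => simpa using hσ
    | insert b s hnotmem ih =>
      have : σ ∩ {v | ∀ w ∈ insert b s, ∑ i, (A w i : ℝ) * v i = 0}
          = (σ ∩ {v | ∀ w ∈ s, ∑ i, (A w i : ℝ) * v i = 0}) ∩ {v | ∑ i, (A b i : ℝ) * v i = 0} := by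
        ext v
        simp only [Set.mem_inter_iff, Set.mem_setOf_eq, Finset.forall_mem_insert]
        tauto
      rw [this]
      exact ih.inter_hyperplane (A b)
  have := key Finset.univ
  simpa using this

/-- the nonnegative orthant is a rational cone -/
theorem RatCone.orthant : RatCone {v : V → ℝ | ∀ i, 0 ≤ v i} := by
  classical
  refine ⟨V, inferInstance, fun j => Pi.single j 1, ?_⟩
  have hcast : ∀ j : V, castQ (Pi.single j 1 : V → ℚ) = Pi.single j (1 : ℝ) := by
    intro j; funext i; by_cases hij : i = j <;> simp [castQ, hij, Pi.single_apply]
  ext v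
  constructor
  · intro hv
    refine ⟨v, hv, ?_⟩
    funext i
    rw [Finset.sum_apply]
    rw [Finset.sum_eq_single i]
    · simp [hcast]
    · intro k _ hk
      simp [hcast, Pi.single_apply, Ne.symm hk]
    · simp
  · rintro ⟨c, hc, rfl⟩
    intro i
    rw [Finset.sum_apply]
    apply Finset.sum_nonneg
    intro k _
    simp only [hcast, Pi.smul_apply, Pi.single_apply, smul_eq_mul]
    by_cases hik : i = k <;> simp [hik, hc k]

/-- image of a rational cone under a rational linear map -/
theorem RatCone.image {W : Type} [Fintype W] {σ : Set (V → ℝ)} (hσ : RatCone σ)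
    (B : W → V → ℚ) :
    RatCone ((fun (v : V → ℝ) (w : W) => ∑ i, (B w i : ℝ) * v i) '' σ) := by
  classical
  obtain ⟨ι, _, g, rfl⟩ := hσ
  refine ⟨ι, inferInstance, fun j => fun w => dotQ (B w) (g j), ?_⟩
  have hmap : ∀ c : ι → ℝ,
      (fun (w : W) => ∑ i, (B w i : ℝ) * (∑ j, c j • castQ (g j)) i)
      = ∑ j, c j • castQ (fun w => dotQ (B w) (g j)) := by
    intro c
    funext w
    rw [dotR_finsum]
    rw [Finset.sum_apply]
    apply Finset.sum_congr rfl
    intro j _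
    rw [dotR_castQ]
    simp [castQ]
  ext v
  constructor
  · rintro ⟨x, ⟨c, hc, rfl⟩, rfl⟩
    exact ⟨c, hc, hmap c⟩
  · rintro ⟨c, hc, rfl⟩
    refine ⟨∑ j, c j • castQ (g j), ⟨c, hc, rfl⟩, ?_⟩
    dsimp only
    exact hmap c

/-- intersection of two rational cones is a rational cone -/
theorem RatCone.inter {σ τ : Set (V → ℝ)} (hσ : RatCone σ) (hτ : RatCone τ) :
    RatCone (σ ∩ τ) := by
  classical
  obtain ⟨ι, _, g, rfl⟩ := hσ
  obtain ⟨κ, _, h, rfl⟩ := hτ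
  -- coefficient space: ι ⊕ κ
  set A : V → (ι ⊕ κ) → ℚ := fun w => Sum.elim (fun j => g j w) (fun k => -(h k w)) with hA
  set B : V → (ι ⊕ κ) → ℚ := fun w => Sum.elim (fun j => g j w) (fun _ => 0) with hB
  have horth : RatCone {c : (ι ⊕ κ) → ℝ | ∀ u, 0 ≤ c u} := RatCone.orthant
  have hK := horth.inter_eqs A
  have hIm := hK.image B
  have : (fun (c : (ι ⊕ κ) → ℝ) (w : V) => ∑ u, (B w u : ℝ) * c u) ''
      ({c : (ι ⊕ κ) → ℝ | ∀ u, 0 ≤ c u} ∩ {c | ∀ w, ∑ u, (A w u : ℝ) * c u = 0})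
      = NCone g ∩ NCone h := by
    ext v
    constructor
    · rintro ⟨c, ⟨hc0, hceq⟩, rfl⟩
      have hsums : ∀ w, ∑ u, (B w u : ℝ) * c u = ∑ j, c (Sum.inl j) * (g j w : ℝ) := by
        intro w
        rw [Fintype.sum_sum_type]
        simp [hB, mul_comm]
      constructor
      · refine ⟨fun j => c (Sum.inl j), fun j => hc0 _, ?_⟩
        funext w
        dsimp only
        rw [hsums w, Finset.sum_apply]
        apply Finset.sum_congr rfl
        intros; simp [castQ, mul_comm]
      · refine ⟨fun k => c (Sum.inr k), fun k => hc0 _, ?_⟩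
        funext w
        dsimp only
        have := hceq w
        rw [Fintype.sum_sum_type] at this
        simp only [hA, Sum.elim_inl, Sum.elim_inr] at this
        push_cast at this
        rw [show ∑ x : κ, -(h x w : ℝ) * c (Sum.inr x)
            = -∑ x : κ, (h x w : ℝ) * c (Sum.inr x) by
          rw [← Finset.sum_neg_distrib]
          apply Finset.sum_congr rfl; intros; ring] at this
        rw [hsums w, Finset.sum_apply]
        simp only [Pi.smul_apply, smul_eq_mul, castQ]
        have : ∑ j, (g j w : ℝ) * c (Sum.inl j) = ∑ k, (h k w : ℝ) * c (Sum.inr k) := by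
          linarith [this]
        rw [show ∑ j, c (Sum.inl j) * (g j w : ℝ) = ∑ j, (g j w : ℝ) * c (Sum.inl j) from
          Finset.sum_congr rfl (by intros; ring), this]
        apply Finset.sum_congr rfl
        intros; ring
    · rintro ⟨⟨c, hc, hcv⟩, ⟨c', hc', hcv'⟩⟩
      refine ⟨Sum.elim c c', ⟨?_, ?_⟩, ?_⟩
      · rintro (j | k)
        · exact hc j
        · exact hc' k
      · intro w
        rw [Fintype.sum_sum_type]
        simp only [hA, Sum.elim_inl, Sum.elim_inr]
        push_cast
        have h1 : v w = ∑ j, c j * (g j w : ℝ) := by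
          rw [hcv, Finset.sum_apply]; apply Finset.sum_congr rfl; intros; simp [castQ]
        have h2 : v w = ∑ k, c' k * (h k w : ℝ) := by
          rw [hcv', Finset.sum_apply]; apply Finset.sum_congr rfl; intros; simp [castQ]
        have : ∑ j, (g j w : ℝ) * c j - ∑ k, (h k w : ℝ) * c' k = 0 := by
          rw [show ∑ j, (g j w : ℝ) * c j = ∑ j, c j * (g j w : ℝ) from
            Finset.sum_congr rfl (by intros; ring)]
          rw [show ∑ k, (h k w : ℝ) * c' k = ∑ k, c' k * (h k w : ℝ) from
            Finset.sum_congr rfl (by intros; ring)]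
          rw [← h1, ← h2]; ring
        calc ∑ j, (g j w : ℝ) * c j + ∑ k, -(h k w : ℝ) * c' k
            = ∑ j, (g j w : ℝ) * c j - ∑ k, (h k w : ℝ) * c' k := by
              rw [sub_eq_add_neg, ← Finset.sum_neg_distrib]
              congr 1; apply Finset.sum_congr rfl; intros; ring
          _ = 0 := this
      · funext w
        dsimp only
        rw [Fintype.sum_sum_type]
        simp only [hB, Sum.elim_inl, Sum.elim_inr]
        push_cast
        rw [show v w = ∑ j, c j * (g j w : ℝ) by
          rw [hcv, Finset.sum_apply]; apply Finset.sum_congr rfl; intros; simp [castQ]]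
        simp [mul_comm]
  rwa [this] at hIm


/-! ## conversion to the Finset form -/

def FCone {d : ℕ} (S : Finset (Fin d → ℚ)) : Set (Fin d → ℝ) :=
  { v | ∃ c : (Fin d → ℚ) → ℝ, (∀ g, 0 ≤ c g) ∧ v = ∑ g ∈ S, c g • castQ g }

lemma NCone_eq_FCone {d : ℕ} {ι : Type} [Fintype ι] (g : ι → Fin d → ℚ) :
    NCone g = FCone (Finset.image g Finset.univ) := by
  classical
  ext v
  constructor
  · rintro ⟨c, hc, rfl⟩
    refine ⟨fun h => ∑ j ∈ univ.filter (fun j => g j = h), c j,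
      fun h => Finset.sum_nonneg (fun j _ => hc j), ?_⟩
    rw [← Finset.sum_fiberwise_of_maps_to (fun j _ => Finset.mem_image_of_mem g (mem_univ j))
      (fun j => c j • castQ (g j))]
    apply Finset.sum_congr rfl
    intro h hh
    rw [Finset.sum_smul]
    apply Finset.sum_congr rfl
    intro j hj
    rw [(Finset.mem_filter.1 hj).2]
  · rintro ⟨c, hc, rfl⟩
    refine ⟨fun j => c (g j) / (univ.filter (fun k => g k = g j)).card,
      fun j => div_nonneg (hc _) (Nat.cast_nonneg _), ?_⟩
    rw [← Finset.sum_fiberwise_of_maps_to (fun j _ => Finset.mem_image_of_mem g (mem_univ j))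
      (fun j => (c (g j) / (univ.filter (fun k => g k = g j)).card) • castQ (g j))]
    apply Finset.sum_congr rfl
    intro h hh
    obtain ⟨j0, -, rfl⟩ := Finset.mem_image.1 hh
    have hrw : ∀ j ∈ univ.filter (fun k => g k = g j0),
        (c (g j) / ((univ.filter (fun k => g k = g j)).card : ℝ)) • castQ (g j)
        = (c (g j0) / ((univ.filter (fun k => g k = g j0)).card : ℝ)) • castQ (g j0) := by
      intro j hj
      rw [(Finset.mem_filter.1 hj).2]
    rw [Finset.sum_congr rfl hrw, Finset.sum_const]
    have hcardpos : 0 < (univ.filter (fun k => g k = g j0)).card :=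
      Finset.card_pos.2 ⟨j0, by simp⟩
    have hne : ((univ.filter (fun k => g k = g j0)).card : ℝ) ≠ 0 := by
      exact_mod_cast hcardpos.ne'
    rw [← Nat.cast_smul_eq_nsmul ℝ, smul_smul]
    congr 1
    field_simp
  
lemma isRPC_iff_exists_FCone {d : ℕ} (σ : Set (Fin d → ℝ)) :
    IsRationalPolyhedralCone σ ↔ ∃ S : Finset (Fin d → ℚ), σ = FCone S := Iff.rfl

lemma isRPC_iff_ratCone {d : ℕ} (σ : Set (Fin d → ℝ)) :
    IsRationalPolyhedralCone σ ↔ RatCone σ := by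
  classical
  rw [isRPC_iff_exists_FCone]
  constructor
  · rintro ⟨S, rfl⟩
    refine ⟨{x // x ∈ S}, inferInstance, fun j => (j : Fin d → ℚ), ?_⟩
    rw [NCone_eq_FCone]
    congr 1
    rw [Finset.univ_eq_attach, Finset.attach_image_val]
  · rintro ⟨ι, _, g, rfl⟩
    exact ⟨Finset.image g Finset.univ, NCone_eq_FCone g⟩

lemma FCone.gen_mem {d : ℕ} {S : Finset (Fin d → ℚ)} {h : Fin d → ℚ} (hh : h ∈ S) :
    castQ h ∈ FCone S := by
  classical
  refine ⟨fun k => if k = h then 1 else 0, fun k => by positivity, ?_⟩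
  rw [Finset.sum_eq_single h]
  · simp
  · intro k _ hk; simp [hk]
  · intro hns; exact absurd hh hns

lemma FCone.zero_mem {d : ℕ} (S : Finset (Fin d → ℚ)) : (0 : Fin d → ℝ) ∈ FCone S :=
  ⟨0, fun _ => le_refl _, by simp⟩

lemma FCone.smul_mem {d : ℕ} {S : Finset (Fin d → ℚ)} {x : Fin d → ℝ} {t : ℝ}
    (ht : 0 ≤ t) (hx : x ∈ FCone S) : t • x ∈ FCone S := by
  obtain ⟨c, hc, rfl⟩ := hx
  exact ⟨fun h => t * c h, fun h => mul_nonneg ht (hc h), by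
    rw [Finset.smul_sum]; apply Finset.sum_congr rfl; intro h _; rw [smul_smul]⟩

lemma FCone.mono {d : ℕ} {S T : Finset (Fin d → ℚ)} (hST : S ⊆ T) : FCone S ⊆ FCone T := by
  classical
  rintro v ⟨c, hc, rfl⟩
  refine ⟨fun h => if h ∈ S then c h else 0, fun h => by by_cases h0 : h ∈ S <;> simp [h0, hc], ?_⟩
  rw [Finset.sum_congr rfl (fun h (_ : h ∈ T) => by
    rw [ite_smul, zero_smul] :
    ∀ h ∈ T, (if h ∈ S then c h else 0) • castQ h = if h ∈ S then c h • castQ h else 0)]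
  rw [Finset.sum_ite_mem, Finset.inter_eq_right.2 hST]


lemma FCone.add_mem {d : ℕ} {S : Finset (Fin d → ℚ)} {x y : Fin d → ℝ}
    (hx : x ∈ FCone S) (hy : y ∈ FCone S) : x + y ∈ FCone S := by
  obtain ⟨c, hc, rfl⟩ := hx; obtain ⟨c', hc', rfl⟩ := hy
  exact ⟨c + c', fun h => add_nonneg (hc h) (hc' h), by
    rw [← Finset.sum_add_distrib]; apply Finset.sum_congr rfl; intro h _
    simp [add_smul]⟩

end Stmt2Aux

open Stmt2Aux Finset

/-- Abstraction of Lemma 3.6 (case i = 1): for a nonzero rational linear `F`, a rational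
piecewise-linear convex `m` positive away from `0`, and a rational polyhedral cone `σ`
containing a point where `F < 0`, the infimum `M` of `F/m` over `σ \ {0}` is a negative
rational number, and the minimizer set `σ₁ = {v ∈ σ | F v - M·m v = 0}` is a nonempty
rational polyhedral cone. -/
theorem stmt2 {d : ℕ} (F : (Fin d → ℝ) → ℝ) (hFlin : IsRationalLinear F) (hFne : F ≠ 0)
    (m : (Fin d → ℝ) → ℝ) (hmpl : IsRationalPiecewiseLinear m)
    (hmconv : ConvexOn ℝ Set.univ m) (hmpos : ∀ v : Fin d → ℝ, v ≠ 0 → 0 < m v)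
    (σ : Set (Fin d → ℝ)) (hσ : IsRationalPolyhedralCone σ)
    (hneg : ∃ v ∈ σ, F v < 0)
    (M : ℝ) (hM : M = sInf ((fun v => F v / m v) '' {v ∈ σ | v ≠ 0})) :
    (∃ Mq : ℚ, M = (Mq : ℝ)) ∧ M < 0 ∧
    IsRationalPolyhedralCone {v ∈ σ | F v - M * m v = 0} ∧
    ∃ v ∈ {v ∈ σ | F v - M * m v = 0}, v ≠ 0 := by
  classical
  obtain ⟨a, hFa⟩ := hFlin
  obtain ⟨n, pieces, L, hpieces, hcover, hL⟩ := hmpl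
  choose b hb using fun i => (hL i).1
  have hm_on : ∀ i, ∀ v ∈ pieces i, m v = L i v := fun i => (hL i).2
  have hmem_piece : ∀ v : Fin d → ℝ, ∃ i, v ∈ pieces i := by
    intro v
    have : v ∈ ⋃ i, pieces i := by rw [hcover]; trivial
    exact Set.mem_iUnion.1 this
  -- basic linearity facts for F
  have hFsum : ∀ {A : Type} (s : Finset A) (c : A → ℝ) (x : A → Fin d → ℝ),
      F (∑ h ∈ s, c h • x h) = ∑ h ∈ s, c h * F (x h) := by
    intro A s c x
    rw [hFa, dotR_finsum]
    apply Finset.sum_congr rfl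
    intros; rw [hFa]
  have hF0 : F 0 = 0 := by rw [hFa]; simp
  have hFadd : ∀ u v, F (u + v) = F u + F v := by
    intro u v
    rw [hFa, hFa, hFa, ← Finset.sum_add_distrib]
    apply Finset.sum_congr rfl
    intros; simp [mul_add]
  have hFsmul : ∀ (t : ℝ) v, F (t • v) = t * F v := by
    intro t v
    rw [hFa, hFa, Finset.mul_sum]
    apply Finset.sum_congr rfl
    intros; simp [Pi.smul_apply]; ring
  have hFcast : ∀ g : Fin d → ℚ, F (castQ g) = ((dotQ a g : ℚ) : ℝ) := by
    intro g; rw [hFa]; exact dotR_castQ a g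
  -- basic facts about m
  have hLsum : ∀ (i : Fin n) {A : Type} (s : Finset A) (c : A → ℝ) (x : A → Fin d → ℝ),
      L i (∑ h ∈ s, c h • x h) = ∑ h ∈ s, c h * L i (x h) := by
    intro i A s c x
    rw [hb, dotR_finsum]
    apply Finset.sum_congr rfl
    intros; rw [hb]
  have hm0 : m 0 = 0 := by
    obtain ⟨i, hi⟩ := hmem_piece 0
    rw [hm_on i 0 hi, hb]; simp
  have hpieceF : ∀ i, ∃ S : Finset (Fin d → ℚ), pieces i = FCone S :=
    fun i => (isRPC_iff_exists_FCone _).1 (hpieces i)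
  choose Sp hSp using hpieceF
  have hm_homog : ∀ (t : ℝ), 0 ≤ t → ∀ v, m (t • v) = t * m v := by
    intro t ht v
    obtain ⟨i, hi⟩ := hmem_piece v
    have hi' : t • v ∈ pieces i := by
      rw [hSp i] at hi ⊢
      exact FCone.smul_mem ht hi
    rw [hm_on i _ hi', hm_on i _ hi, hb, hb, Finset.mul_sum]
    apply Finset.sum_congr rfl
    intros; simp [Pi.smul_apply]; ring
  have hm_subadd : ∀ u v : Fin d → ℝ, m (u + v) ≤ m u + m v := by
    intro u v
    have hkey := hmconv.2 (Set.mem_univ u) (Set.mem_univ v)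
      (by norm_num : (0:ℝ) ≤ 1/2) (by norm_num : (0:ℝ) ≤ 1/2) (by norm_num)
    have heq : (1/2 : ℝ) • u + (1/2 : ℝ) • v = (1/2 : ℝ) • (u + v) := by
      rw [smul_add]
    rw [heq, hm_homog (1/2 : ℝ) (by norm_num) (u + v)] at hkey
    simp only [smul_eq_mul] at hkey
    linarith
  have hmcast : ∀ g : Fin d → ℚ, ∃ q : ℚ, m (castQ g) = (q : ℝ) := by
    intro g
    obtain ⟨i, hi⟩ := hmem_piece (castQ g)
    exact ⟨dotQ (b i) g, by rw [hm_on i _ hi, hb]; exact dotR_castQ (b i) g⟩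
  choose mq hmq using hmcast
  -- decomposition of σ into pieces with rational generators
  have hratσ : RatCone σ := (isRPC_iff_ratCone σ).1 hσ
  have hSi : ∀ i, ∃ S : Finset (Fin d → ℚ), σ ∩ pieces i = FCone S := by
    intro i
    exact (isRPC_iff_exists_FCone _).1 ((isRPC_iff_ratCone _).2
      (hratσ.inter ((isRPC_iff_ratCone _).1 (hpieces i))))
  choose S hS using hSi
  set G : Finset (Fin d → ℚ) := Finset.univ.biUnion S with hG
  have hSG : ∀ i, S i ⊆ G := fun i => Finset.subset_biUnion_of_mem S (mem_univ i)
  have hGσ : ∀ g ∈ G, castQ g ∈ σ ∧ ∃ i, castQ g ∈ pieces i := by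
    intro g hg
    obtain ⟨i, -, hgi⟩ := Finset.mem_biUnion.1 hg
    have : castQ g ∈ σ ∩ pieces i := by rw [hS i]; exact FCone.gen_mem hgi
    exact ⟨this.1, i, this.2⟩
  have hcov : ∀ v ∈ σ, ∃ i, v ∈ FCone (S i) ∧ v ∈ pieces i := by
    intro v hv
    obtain ⟨i, hi⟩ := hmem_piece v
    exact ⟨i, by rw [← hS i]; exact ⟨hv, hi⟩, hi⟩
  -- the key lower-bound transfer from generators to the whole cone
  have keybound : ∀ t : ℝ, (∀ g ∈ G, t * m (castQ g) ≤ F (castQ g)) →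
      ∀ v ∈ σ, t * m v ≤ F v := by
    intro t hgen v hv
    obtain ⟨i, hvF, hvp⟩ := hcov v hv
    obtain ⟨c, hc, rfl⟩ := hvF
    have hmval : m (∑ h ∈ S i, c h • castQ h) = ∑ h ∈ S i, c h * m (castQ h) := by
      rw [hm_on i _ hvp, hLsum i]
      apply Finset.sum_congr rfl
      intro h hh
      have : castQ h ∈ pieces i := by
        have : castQ h ∈ σ ∩ pieces i := by rw [hS i]; exact FCone.gen_mem hh
        exact this.2
      rw [hm_on i _ this]
    rw [hmval, hFsum, Finset.mul_sum]
    apply Finset.sum_le_sum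
    intro h hh
    have h1 := hgen h (hSG i hh)
    have h2 := hc h
    nlinarith
  -- some generator has F < 0
  have hexneg : ∃ g ∈ G, F (castQ g) < 0 := by
    by_contra hcon
    push_neg at hcon
    obtain ⟨v, hvσ, hvF⟩ := hneg
    have := keybound 0 (fun g hg => by simpa using hcon g hg) v hvσ
    simp at this
    linarith
  obtain ⟨g1, hg1G, hg1F⟩ := hexneg
  have hg1ne : castQ g1 ≠ 0 := by
    intro h0
    rw [h0, hF0] at hg1F
    exact lt_irrefl 0 hg1F
  set T : Finset (Fin d → ℚ) := G.filter (fun g => castQ g ≠ 0) with hT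
  have hg1T : g1 ∈ T := Finset.mem_filter.2 ⟨hg1G, hg1ne⟩
  set R : (Fin d → ℚ) → ℝ := fun g => F (castQ g) / m (castQ g) with hR
  have hTne : (T.image R).Nonempty := ⟨R g1, Finset.mem_image_of_mem R hg1T⟩
  set Rmin : ℝ := (T.image R).min' hTne with hRmin
  obtain ⟨g0, hg0T, hRg0⟩ := Finset.mem_image.1 ((T.image R).min'_mem hTne)
  rw [← hRmin] at hRg0
  have hg0G : g0 ∈ G := (Finset.mem_filter.1 hg0T).1
  have hg0ne : castQ g0 ≠ 0 := (Finset.mem_filter.1 hg0T).2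
  have hle : ∀ g ∈ T, Rmin ≤ R g :=
    fun g hg => Finset.min'_le _ _ (Finset.mem_image_of_mem R hg)
  have hMneg : Rmin < 0 := by
    refine lt_of_le_of_lt (hle g1 hg1T) ?_
    exact div_neg_of_neg_of_pos hg1F (hmpos _ hg1ne)
  have hlow : ∀ g ∈ G, Rmin * m (castQ g) ≤ F (castQ g) := by
    intro g hg
    by_cases h0 : castQ g = 0
    · rw [h0, hm0, hF0]; simp
    · have hmp := hmpos _ h0
      have := hle g (Finset.mem_filter.2 ⟨hg, h0⟩)
      rw [hR] at this
      calc Rmin * m (castQ g) ≤ (F (castQ g) / m (castQ g)) * m (castQ g) :=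
            mul_le_mul_of_nonneg_right this hmp.le
        _ = F (castQ g) := div_mul_cancel₀ _ hmp.ne'
  have hbound : ∀ v ∈ σ, Rmin * m v ≤ F v := keybound Rmin hlow
  -- identify the infimum
  have hg0σ : castQ g0 ∈ σ := (hGσ g0 hg0G).1
  have hmemIm : Rmin ∈ (fun v => F v / m v) '' {v ∈ σ | v ≠ 0} :=
    ⟨castQ g0, ⟨hg0σ, hg0ne⟩, hRg0⟩
  have hlb : ∀ y ∈ (fun v => F v / m v) '' {v ∈ σ | v ≠ 0}, Rmin ≤ y := by
    rintro y ⟨v, ⟨hvσ, hvne⟩, rfl⟩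
    exact (le_div_iff₀ (hmpos v hvne)).2 (hbound v hvσ)
  have hMeq : M = Rmin := by
    rw [hM]
    exact le_antisymm (csInf_le ⟨Rmin, hlb⟩ hmemIm)
      (le_csInf (Set.nonempty_of_mem hmemIm) hlb)
  have hmg0pos := hmpos _ hg0ne
  -- rationality
  set qM : ℚ := dotQ a g0 / mq g0 with hqM
  have hMrat : M = (qM : ℝ) := by
    rw [hMeq, ← hRg0, hR, hqM]
    push_cast
    rw [hFcast, hmq]
  refine ⟨⟨qM, hMrat⟩, by rw [hMeq]; exact hMneg, ?_, ?_⟩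
  · -- the minimizer set is a rational polyhedral cone
    -- characterization of the minimizer condition on each piece
    have hchar : ∀ (i : Fin n), ∀ v ∈ pieces i,
        ((∑ k, (((a - qM • b i) k : ℚ) : ℝ) * v k = 0) ↔ F v - M * m v = 0) := by
      intro i v hv
      have : ∑ k, (((a - qM • b i) k : ℚ) : ℝ) * v k
          = F v - M * m v := by
        rw [hFa, hm_on i v hv, hb, hMrat, Finset.mul_sum, ← Finset.sum_sub_distrib]
        apply Finset.sum_congr rfl
        intro k _
        simp only [Pi.sub_apply, Pi.smul_apply, smul_eq_mul]
        push_cast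
        ring
      rw [this]
    have hDrat : ∀ i : Fin n, ∃ Hi : Finset (Fin d → ℚ),
        (σ ∩ pieces i) ∩ {v | ∑ k, (((a - qM • b i) k : ℚ) : ℝ) * v k = 0} = FCone Hi := by
      intro i
      refine (isRPC_iff_exists_FCone _).1 ((isRPC_iff_ratCone _).2 ?_)
      exact RatCone.inter_hyperplane
        (hratσ.inter ((isRPC_iff_ratCone _).1 (hpieces i))) (a - qM • b i)
    choose H hH using hDrat
    set Hall : Finset (Fin d → ℚ) := Finset.univ.biUnion H with hHall
    rw [isRPC_iff_exists_FCone]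
    refine ⟨Hall, ?_⟩
    have hDsub : ∀ i : Fin n, FCone (H i) ⊆ {v ∈ σ | F v - M * m v = 0} := by
      intro i v hv
      rw [← hH i] at hv
      obtain ⟨⟨hvσ, hvp⟩, hveq⟩ := hv
      exact ⟨hvσ, (hchar i v hvp).1 hveq⟩
    -- σ₁ is closed under nonneg combinations
    obtain ⟨Sσ, hSσ⟩ := hσ
    have hσ0 : (0 : Fin d → ℝ) ∈ σ := by rw [hSσ]; exact FCone.zero_mem Sσ
    have h1zero : (0 : Fin d → ℝ) ∈ {v ∈ σ | F v - M * m v = 0} :=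
      ⟨hσ0, by rw [hF0, hm0]; ring⟩
    have h1add : ∀ x ∈ {v ∈ σ | F v - M * m v = 0}, ∀ y ∈ {v ∈ σ | F v - M * m v = 0},
        x + y ∈ {v ∈ σ | F v - M * m v = 0} := by
      rintro x ⟨hxσ, hxe⟩ y ⟨hyσ, hye⟩
      have hxyσ : x + y ∈ σ := by
        rw [hSσ] at hxσ hyσ ⊢
        exact FCone.add_mem hxσ hyσ
      refine ⟨hxyσ, ?_⟩
      have hge := hbound (x + y) hxyσ
      rw [← hMeq] at hge
      have hsub := hm_subadd x y
      have hFxy : F (x + y) = F x + F y := hFadd x y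
      have hMneg' : M < 0 := by rw [hMeq]; exact hMneg
      nlinarith [hsub, hge, hxe, hye, hMneg']
    have h1smul : ∀ t : ℝ, 0 ≤ t → ∀ x ∈ {v ∈ σ | F v - M * m v = 0},
        t • x ∈ {v ∈ σ | F v - M * m v = 0} := by
      rintro t ht x ⟨hxσ, hxe⟩
      refine ⟨by rw [hSσ] at hxσ ⊢; exact FCone.smul_mem ht hxσ, ?_⟩
      rw [hFsmul, hm_homog t ht]
      nlinarith [hxe]
    ext v
    constructor
    · rintro ⟨hvσ, hveq⟩
      obtain ⟨i, hvF, hvp⟩ := hcov v hvσ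
      have hvD : v ∈ FCone (H i) := by
        rw [← hH i]
        exact ⟨by rw [← hS i] at hvF; exact hvF, (hchar i v hvp).2 hveq⟩
      exact FCone.mono (Finset.subset_biUnion_of_mem H (mem_univ i)) hvD
    · rintro ⟨c, hc, rfl⟩
      apply mem_of_combo h1zero h1add h1smul Hall c (fun h => castQ h) (fun h _ => hc h)
      intro h hh
      obtain ⟨i, -, hhi⟩ := Finset.mem_biUnion.1 hh
      exact hDsub i (FCone.gen_mem hhi)
  · -- nonempty
    refine ⟨castQ g0, ⟨hg0σ, ?_⟩, hg0ne⟩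
    have : F (castQ g0) = M * m (castQ g0) := by
      rw [hMeq, ← hRg0, hR]
      field_simp
    rw [this]; ring
end

section
/- Let q : ℝ^d → ℝ be a positive definite quadratic form with rational coefficients, F : ℝ^d → ℝ a rational linear functional, and σ ⊆ ℝ^d a rational polyhedral cone containing a point with F < 0. Then the function v ↦ F(v)/√q(v) on σ \ {0} attains its infimum, the set of minimizers is a single ray ℝ_{>0}·v₀, and this ray contains a rational point v₀ ∈ ℚ^d. -/
open Finset

lemma cara_aux {ι : Type*} [Fintype ι] [DecidableEq ι] {E : Type*} [AddCommGroup E] [Module ℝ E]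
    (f : ι → E) :
    ∀ n (c : ι → ℝ), (Finset.univ.filter fun i => c i ≠ 0).card ≤ n → (∀ i, 0 ≤ c i) →
    ∃ c' : ι → ℝ, (∀ i, 0 ≤ c' i) ∧ ∑ i, c' i • f i = ∑ i, c i • f i ∧
      LinearIndependent ℝ (fun i : {i // c' i ≠ 0} => f i) := by
  intro n
  induction n with
  | zero =>
    intro c hcard hc
    refine ⟨c, hc, rfl, ?_⟩
    have hz : ∀ i, c i = 0 := by
      intro i
      by_contra h
      have : (Finset.univ.filter fun i => c i ≠ 0).Nonempty := ⟨i, by simp [h]⟩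
      have := Finset.card_pos.2 this
      omega
    have : IsEmpty {i // c i ≠ 0} := ⟨fun i => i.2 (hz i.1)⟩
    exact linearIndependent_empty_type
  | succ n ih =>
    intro c hcard hc
    by_cases hL : LinearIndependent ℝ (fun i : {i // c i ≠ 0} => f i)
    · exact ⟨c, hc, rfl, hL⟩
    obtain ⟨g, hg0, j₀, hj₀⟩ := Fintype.not_linearIndependent_iff.1 hL
    set lam : ι → ℝ := fun i => if h : c i ≠ 0 then g ⟨i, h⟩ else 0 with hlam
    have hlam_supp : ∀ i, lam i ≠ 0 → c i ≠ 0 := by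
      intro i h
      by_contra hci
      apply h
      simp [hlam, hci]
    have hsum_eq : ∀ μ : ι → ℝ, (∀ i, μ i ≠ 0 → c i ≠ 0) →
        ∑ i, μ i • f i = ∑ i : {i // c i ≠ 0}, μ i.1 • f i.1 := by
      intro μ hμ
      rw [← Finset.sum_subtype (Finset.univ.filter fun i => c i ≠ 0) (by simp) (fun i => μ i • f i)]
      rw [Finset.sum_filter_of_ne]
      intro x _ hx
      by_contra hcx
      have hμx : μ x = 0 := by
        by_contra h
        exact (hμ x h) hcx
      exact hx (by simp [hμx])
    have hlamsum : ∑ i, lam i • f i = 0 := by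
      rw [hsum_eq lam hlam_supp, ← hg0]
      refine Finset.sum_congr rfl fun i _ => ?_
      simp [hlam, i.2]
    -- choose mu with a positive entry
    obtain ⟨mu, hmu_supp, hmusum, i₁, hi₁⟩ :
        ∃ mu : ι → ℝ, (∀ i, mu i ≠ 0 → c i ≠ 0) ∧ (∑ i, mu i • f i = 0) ∧ ∃ i, 0 < mu i := by
      rcases lt_or_ge 0 (lam j₀.1) with h | h
      · exact ⟨lam, hlam_supp, hlamsum, j₀.1, h⟩
      · refine ⟨-lam, fun i hi => hlam_supp i (by simpa using hi), by
          simp only [Pi.neg_apply, neg_smul, Finset.sum_neg_distrib, hlamsum, neg_zero], j₀.1, ?_⟩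
        have : lam j₀.1 ≠ 0 := by simpa [hlam, j₀.2] using hj₀
        have : lam j₀.1 < 0 := lt_of_le_of_ne h this
        simpa using this
    -- minimize ratio
    set P : Finset ι := Finset.univ.filter fun i => 0 < mu i with hP
    have hPne : P.Nonempty := ⟨i₁, by simp [hP, hi₁]⟩
    obtain ⟨i₀, hi₀P, hi₀min⟩ := P.exists_min_image (fun i => c i / mu i) hPne
    have hmu_i₀ : 0 < mu i₀ := by simpa [hP] using hi₀P
    set t : ℝ := c i₀ / mu i₀ with ht
    have ht0 : 0 ≤ t := div_nonneg (hc i₀) hmu_i₀.le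
    set c' : ι → ℝ := fun i => c i - t * mu i with hc'
    have hc'nonneg : ∀ i, 0 ≤ c' i := by
      intro i
      rcases lt_or_ge 0 (mu i) with h | h
      · have hiP : i ∈ P := by simp [hP, h]
        have h2 := hi₀min i hiP
        have h3 : t * mu i ≤ (c i / mu i) * mu i :=
          mul_le_mul_of_nonneg_right h2 h.le
        rw [div_mul_cancel₀ _ h.ne'] at h3
        show 0 ≤ c i - t * mu i
        linarith
      · have : t * mu i ≤ 0 := mul_nonpos_of_nonneg_of_nonpos ht0 h
        simp only [hc', sub_nonneg]
        linarith [hc i]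
    have hc'sum : ∑ i, c' i • f i = ∑ i, c i • f i := by
      simp only [hc', sub_smul, Finset.sum_sub_distrib, mul_smul]
      rw [← Finset.smul_sum, hmusum, smul_zero, sub_zero]
    have hsubset : (Finset.univ.filter fun i => c' i ≠ 0) ⊂ Finset.univ.filter fun i => c i ≠ 0 := by
      constructor
      · intro i hi
        simp only [Finset.mem_filter, Finset.mem_univ, true_and] at hi ⊢
        by_contra hci
        have : mu i = 0 := by
          by_contra h
          exact (hmu_supp i h) hci
        apply hi
        simp [hc', hci, this]
      · intro hsub
        have h1 : i₀ ∈ Finset.univ.filter fun i => c i ≠ 0 := by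
          simp only [Finset.mem_filter, Finset.mem_univ, true_and]
          exact hmu_supp i₀ hmu_i₀.ne'
        have h2 := hsub h1
        simp only [Finset.mem_filter, Finset.mem_univ, true_and] at h2
        apply h2
        rw [hc', ht]
        field_simp
        ring
    have hcard' : (Finset.univ.filter fun i => c' i ≠ 0).card ≤ n := by
      have := Finset.card_lt_card hsubset
      omega
    obtain ⟨c'', h1, h2, h3⟩ := ih c' hcard' hc'nonneg
    exact ⟨c'', h1, by rw [h2, hc'sum], h3⟩

/-- The nonnegative span of a finite linearly independent family is closed. -/
lemma indep_cone_closed {d : ℕ} {ι : Type*} [Fintype ι] (f : ι → (Fin d → ℝ))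
    (hf : LinearIndependent ℝ f) :
    IsClosed {v : Fin d → ℝ | ∃ c : ι → ℝ, (∀ i, 0 ≤ c i) ∧ v = ∑ i, c i • f i} := by
  let Φ : (ι → ℝ) →ₗ[ℝ] (Fin d → ℝ) :=
    { toFun := fun c => ∑ i, c i • f i
      map_add' := by intro x y; simp [add_smul, Finset.sum_add_distrib]
      map_smul' := by intro m x; simp [smul_smul, Finset.smul_sum]
    }
  have hker : LinearMap.ker Φ = ⊥ := by
    rw [LinearMap.ker_eq_bot']
    intro m hm
    have := Fintype.linearIndependent_iff.1 hf m hm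
    funext i
    exact this i
  have hemb := LinearMap.isClosedEmbedding_of_injective hker
  have hclosed : IsClosed {c : ι → ℝ | ∀ i, 0 ≤ c i} := by
    have : {c : ι → ℝ | ∀ i, 0 ≤ c i} = ⋂ i, (fun c : ι → ℝ => c i) ⁻¹' (Set.Ici 0) := by
      ext c; simp [Set.mem_iInter]
    rw [this]
    exact isClosed_iInter fun i => isClosed_Ici.preimage (continuous_apply i)
  have himg : {v : Fin d → ℝ | ∃ c : ι → ℝ, (∀ i, 0 ≤ c i) ∧ v = ∑ i, c i • f i} =
      Φ '' {c : ι → ℝ | ∀ i, 0 ≤ c i} := by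
    ext v
    constructor
    · rintro ⟨c, hc, rfl⟩; exact ⟨c, hc, rfl⟩
    · rintro ⟨c, hc, rfl⟩; exact ⟨c, hc, rfl⟩
  rw [himg]
  exact hemb.isClosedMap _ hclosed

lemma cone_closed {d : ℕ} (S : Finset (Fin d → ℚ)) :
    IsClosed {v : Fin d → ℝ | ∃ c : (Fin d → ℚ) → ℝ, (∀ g, 0 ≤ c g) ∧
      v = ∑ g ∈ S, c g • (fun i => (g i : ℝ))} := by
  classical
  set cast : (Fin d → ℚ) → (Fin d → ℝ) := fun g => (fun i => (g i : ℝ)) with hcast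
  set A : Finset (Fin d → ℚ) → Set (Fin d → ℝ) := fun T =>
    {v | LinearIndependent ℝ (fun i : ↥T => cast i.1) ∧
      ∃ c : ↥T → ℝ, (∀ i, 0 ≤ c i) ∧ v = ∑ i, c i • cast i.1} with hA
  have hAclosed : ∀ T, IsClosed (A T) := by
    intro T
    by_cases hind : LinearIndependent ℝ (fun i : ↥T => cast i.1)
    · have : A T = {v | ∃ c : ↥T → ℝ, (∀ i, 0 ≤ c i) ∧ v = ∑ i, c i • cast i.1} := by
        ext v; simp [hA, hind]
      rw [this]
      exact indep_cone_closed _ hind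
    · have : A T = ∅ := by ext v; simp [hA, hind]
      rw [this]
      exact isClosed_empty
  have hunion : {v : Fin d → ℝ | ∃ c : (Fin d → ℚ) → ℝ, (∀ g, 0 ≤ c g) ∧
      v = ∑ g ∈ S, c g • (fun i => (g i : ℝ))} = ⋃ T ∈ S.powerset, A T := by
    ext v
    simp only [Set.mem_setOf_eq, Set.mem_iUnion, Finset.mem_powerset]
    constructor
    · rintro ⟨c, hc, rfl⟩
      -- convert to subtype sum
      have hsum : ∑ g ∈ S, c g • cast g = ∑ i : ↥S, c i.1 • cast i.1 :=
        Finset.sum_subtype S (fun x => Iff.rfl) (fun g => c g • cast g)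
      obtain ⟨c', hc'0, hc'sum, hc'ind⟩ := cara_aux (fun i : ↥S => cast i.1) _
        (fun i : ↥S => c i.1) le_rfl (fun i => hc i.1)
      set T : Finset (Fin d → ℚ) := S.filter (fun g => ∃ h : g ∈ S, c' ⟨g, h⟩ ≠ 0) with hT
      have hTsub : T ⊆ S := Finset.filter_subset _ _
      have hmemT : ∀ g (h : g ∈ S), g ∈ T ↔ c' ⟨g, h⟩ ≠ 0 := by
        intro g h
        constructor
        · intro hgT
          obtain ⟨-, h', hne⟩ := Finset.mem_filter.1 hgT
          exact hne
        · intro hne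
          exact Finset.mem_filter.2 ⟨h, h, hne⟩
      refine ⟨T, hTsub, ?_⟩
      -- the equivalence between {i : ↥S // c' i ≠ 0} and ↥T
      set e : {i : ↥S // c' i ≠ 0} ≃ ↥T :=
        { toFun := fun j => ⟨j.1.1, (hmemT j.1.1 j.1.2).2 j.2⟩
          invFun := fun i => ⟨⟨i.1, hTsub i.2⟩, (hmemT i.1 (hTsub i.2)).1 i.2⟩
          left_inv := fun j => by ext; rfl
          right_inv := fun i => by ext; rfl } with he
      have hindT : LinearIndependent ℝ (fun i : ↥T => cast i.1) := by
        exact (linearIndependent_equiv e (f := fun i : ↥T => cast i.1)).1 hc'ind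
      refine ⟨hindT, fun i => c' ⟨i.1, hTsub i.2⟩, fun i => hc'0 _, ?_⟩
      rw [hsum, ← hc'sum]
      -- restrict the sum over ↥S to the support, then reindex by e
      have h1 : ∑ i : ↥S, c' i • cast i.1 = ∑ j : {i : ↥S // c' i ≠ 0}, c' j.1 • cast j.1.1 := by
        rw [← Finset.sum_subtype (Finset.univ.filter fun i : ↥S => c' i ≠ 0) (by simp)
          (fun i => c' i • cast i.1)]
        rw [Finset.sum_filter_of_ne]
        intro x _ hx
        intro hcx
        exact hx (by simp [hcx])
      rw [h1]
      rw [← Equiv.sum_comp e (fun i : ↥T => c' ⟨i.1, hTsub i.2⟩ • cast i.1)]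
      apply Finset.sum_congr rfl
      intro j _
      rfl
    · rintro ⟨T, hTsub, hind, c, hc0, rfl⟩
      refine ⟨fun g => if h : g ∈ T then c ⟨g, h⟩ else 0, ?_, ?_⟩
      · intro g
        by_cases h : g ∈ T <;> simp [h, hc0]
      · rw [← Finset.sum_subset hTsub (by intro x _ hx; simp [hx])]
        rw [Finset.sum_subtype T (fun x => Iff.rfl)
          (fun g => (if h : g ∈ T then c ⟨g, h⟩ else 0) • cast g)]
        apply Finset.sum_congr rfl
        intro i _
        simp [i.2]
  rw [hunion]
  exact Set.Finite.isClosed_biUnion (Finset.finite_toSet _) (fun T _ => hAclosed T)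

lemma key_quad {B Q δ : ℝ} (hδ : 0 < δ) (hQ : 0 ≤ Q)
    (h : ∀ t : ℝ, |t| ≤ δ → 0 ≤ t * B + t ^ 2 * Q) : B = 0 := by
  by_contra hB
  set ε := min δ (|B| / (2 * Q + 1)) with hε
  have hε0 : 0 < ε := lt_min hδ (div_pos (abs_pos.2 hB) (by linarith))
  have hε1 : ε ≤ δ := min_le_left _ _
  have hε2 : ε ≤ |B| / (2 * Q + 1) := min_le_right _ _
  have hεQ : ε * Q ≤ |B| / 2 := by
    have h1 : ε * Q ≤ (|B| / (2 * Q + 1)) * Q := mul_le_mul_of_nonneg_right hε2 hQ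
    have h2 : (|B| / (2 * Q + 1)) * Q ≤ |B| / 2 := by
      rw [div_mul_eq_mul_div, div_le_div_iff₀ (by linarith) (by norm_num)]
      nlinarith [abs_nonneg B]
    linarith
  rcases lt_or_ge 0 B with hBpos | hBneg
  · have := h (-ε) (by rw [abs_neg, abs_of_pos hε0]; exact hε1)
    have hab : |B| = B := abs_of_pos hBpos
    nlinarith
  · have hBneg' : B < 0 := lt_of_le_of_ne hBneg hB
    have := h ε (by rw [abs_of_pos hε0]; exact hε1)
    have hab : |B| = -B := abs_of_neg hBneg'
    nlinarith

lemma rat_solution {n : Type*} [Fintype n] [DecidableEq n] (M : n → n → ℚ) (b : n → ℚ)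
    (x : n → ℝ) (hx : ∀ h, ∑ g, ((M h g : ℚ) : ℝ) * x g = ((b h : ℚ) : ℝ)) :
    ∃ t : n → ℚ, ∀ h, ∑ g, M h g * t g = b h := by
  classical
  set ψ : (n → ℚ) →ₗ[ℚ] (n → ℚ) :=
    { toFun := fun t h => ∑ g, M h g * t g
      map_add' := by
        intro u v
        funext h
        simp [mul_add, Finset.sum_add_distrib]
      map_smul' := by
        intro m u
        funext h
        simp only [Pi.smul_apply, smul_eq_mul, RingHom.id_apply, Finset.mul_sum]
        exact Finset.sum_congr rfl fun g _ => by ring } with hψ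
  have hbrange : b ∈ LinearMap.range ψ := by
    by_contra hb
    obtain ⟨f, hfb, hfmap⟩ := Submodule.exists_dual_map_eq_bot_of_notMem hb inferInstance
    set y : n → ℚ := fun h => f (fun j => if h = j then 1 else 0) with hy
    have hfrepr : ∀ t : n → ℚ, f t = ∑ h, t h * y h := by
      intro t
      conv_lhs => rw [pi_eq_sum_univ t]
      rw [map_sum]
      refine Finset.sum_congr rfl fun h _ => ?_
      rw [map_smul]
      simp [hy]
    have hker : ∀ u ∈ LinearMap.range ψ, f u = 0 := by
      intro u hu
      have hmem : f u ∈ (LinearMap.range ψ).map f := Submodule.mem_map_of_mem hu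
      rw [hfmap] at hmem
      exact (Submodule.mem_bot ℚ).1 hmem
    have hyM : ∀ g : n, ∑ h, M h g * y h = 0 := by
      intro g
      have h1 : f (ψ (fun j => if g = j then 1 else 0)) = 0 := hker _ ⟨_, rfl⟩
      rw [hfrepr] at h1
      have h2 : ∀ h : n, (ψ (fun j => if g = j then 1 else 0)) h = M h g := by
        intro h
        show ∑ g', M h g' * (if g = g' then 1 else 0) = M h g
        rw [Finset.sum_congr rfl (fun g' (_ : g' ∈ Finset.univ) =>
          (by rw [mul_ite, mul_one, mul_zero] :
            M h g' * (if g = g' then 1 else 0) = if g = g' then M h g' else 0))]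
        rw [Finset.sum_ite_eq]
        simp
      rw [Finset.sum_congr rfl (fun h _ => by rw [h2 h])] at h1
      exact h1
    have hcast : ∀ g : n, ∑ h : n, ((M h g : ℚ) : ℝ) * ((y h : ℚ) : ℝ) = 0 := by
      intro g
      have := congrArg (fun r : ℚ => (r : ℝ)) (hyM g)
      push_cast at this
      simpa using this
    have hzero : ∑ h : n, ((b h : ℚ) : ℝ) * ((y h : ℚ) : ℝ) = 0 := by
      have e1 : ∑ h : n, ((b h : ℚ) : ℝ) * ((y h : ℚ) : ℝ)
          = ∑ h : n, ∑ g : n, (((M h g : ℚ) : ℝ) * x g) * ((y h : ℚ) : ℝ) := by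
        refine Finset.sum_congr rfl fun h _ => ?_
        rw [← hx h, Finset.sum_mul]
      rw [e1, Finset.sum_comm]
      refine Finset.sum_eq_zero fun g _ => ?_
      have e2 : ∑ h : n, (((M h g : ℚ) : ℝ) * x g) * ((y h : ℚ) : ℝ)
          = (∑ h : n, ((M h g : ℚ) : ℝ) * ((y h : ℚ) : ℝ)) * x g := by
        rw [Finset.sum_mul]
        exact Finset.sum_congr rfl fun h _ => by ring
      rw [e2, hcast g, zero_mul]
    have hne : (∑ h : n, b h * y h : ℚ) ≠ 0 := by
      rw [← hfrepr b]
      exact hfb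
    apply hne
    have hc : ((∑ h : n, b h * y h : ℚ) : ℝ) = 0 := by
      push_cast
      exact hzero
    exact_mod_cast hc
  obtain ⟨t, ht⟩ := hbrange
  exact ⟨t, fun h => congrFun ht h⟩

set_option maxHeartbeats 2000000 in
/-- Abstraction of Lemma 3.6 (case i = 2): for a rational linear functional `F`, a
rational positive definite quadratic form `q`, and a rational polyhedral cone `σ`
containing a point with `F < 0`, the function `v ↦ F(v)/√q(v)` on `σ \ {0}` attains its
infimum, the set of minimizers is a single ray `ℝ_{>0}·v₀`, and this ray contains a
rational point `v₀ ∈ ℚ^d`. -/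
theorem stmt3 {d : ℕ} (F : (Fin d → ℝ) → ℝ) (hFlin : IsRationalLinear F)
    (q : (Fin d → ℝ) → ℝ)
    (hqrat : ∃ A : Fin d → Fin d → ℚ, ∀ v, q v = ∑ i, ∑ j, (A i j : ℝ) * v i * v j)
    (hqpos : ∀ v : Fin d → ℝ, v ≠ 0 → 0 < q v)
    (σ : Set (Fin d → ℝ)) (hσ : IsRationalPolyhedralCone σ)
    (hneg : ∃ v ∈ σ, F v < 0) :
    ∃ v₀ : Fin d → ℚ,
      (fun i => (v₀ i : ℝ)) ∈ σ ∧ (fun i => (v₀ i : ℝ)) ≠ 0 ∧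
      (∀ v ∈ σ, v ≠ 0 →
        F (fun i => (v₀ i : ℝ)) / Real.sqrt (q (fun i => (v₀ i : ℝ))) ≤
          F v / Real.sqrt (q v)) ∧
      (∀ v ∈ σ, v ≠ 0 →
        F v / Real.sqrt (q v) =
          F (fun i => (v₀ i : ℝ)) / Real.sqrt (q (fun i => (v₀ i : ℝ))) →
        ∃ c : ℝ, 0 < c ∧ v = c • (fun i => (v₀ i : ℝ))) := by
  classical
  obtain ⟨a, ha⟩ := hFlin
  obtain ⟨A, hA⟩ := hqrat
  obtain ⟨S, hS⟩ := hσ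
  obtain ⟨v₁, hv₁σ, hv₁F⟩ := hneg
  -- basic linearity facts for F
  have hF0 : F 0 = 0 := by simp [ha]
  have hFadd : ∀ x y, F (x + y) = F x + F y := by
    intro x y
    simp only [ha, Pi.add_apply, mul_add, Finset.sum_add_distrib]
  have hFsmul : ∀ (t : ℝ) x, F (t • x) = t * F x := by
    intro t x
    rw [ha, ha, Finset.mul_sum]
    exact Finset.sum_congr rfl fun i _ => by simp [Pi.smul_apply]; ring
  have hFcont : Continuous F := by
    have : F = fun v => ∑ i, (a i : ℝ) * v i := funext ha
    rw [this]
    exact continuous_finset_sum _ fun i _ => continuous_const.mul (continuous_apply i)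
  -- the bilinear form associated to q
  set Bl : (Fin d → ℝ) → (Fin d → ℝ) → ℝ :=
    fun x y => ∑ i, ∑ j, (A i j : ℝ) * (x i * y j + y i * x j) with hBl
  have hq_expand : ∀ x y, q (x + y) = q x + Bl x y + q y := by
    intro x y
    simp only [hA, hBl, Pi.add_apply, ← Finset.sum_add_distrib]
    exact Finset.sum_congr rfl fun i _ => Finset.sum_congr rfl fun j _ => by ring
  have hq0 : q 0 = 0 := by simp [hA]
  have hqsmul : ∀ (t : ℝ) x, q (t • x) = t ^ 2 * q x := by
    intro t x
    rw [hA, hA, Finset.mul_sum]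
    refine Finset.sum_congr rfl fun i _ => ?_
    rw [Finset.mul_sum]
    exact Finset.sum_congr rfl fun j _ => by simp [Pi.smul_apply]; ring
  have hqnonneg : ∀ x, 0 ≤ q x := by
    intro x
    by_cases hx : x = 0
    · simp [hx, hq0]
    · exact (hqpos x hx).le
  have hqcont : Continuous q := by
    have : q = fun v => ∑ i, ∑ j, (A i j : ℝ) * v i * v j := funext hA
    rw [this]
    exact continuous_finset_sum _ fun i _ => continuous_finset_sum _ fun j _ =>
      (continuous_const.mul (continuous_apply i)).mul (continuous_apply j)
  have hBl_smul_left : ∀ (t : ℝ) x y, Bl (t • x) y = t * Bl x y := by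
    intro t x y
    rw [hBl, Finset.mul_sum]
    refine Finset.sum_congr rfl fun i _ => ?_
    rw [Finset.mul_sum]
    exact Finset.sum_congr rfl fun j _ => by simp [Pi.smul_apply]; ring
  have hBl_add_left : ∀ x x' y, Bl (x + x') y = Bl x y + Bl x' y := by
    intro x x' y
    simp only [hBl, Pi.add_apply, ← Finset.sum_add_distrib]
    exact Finset.sum_congr rfl fun i _ => Finset.sum_congr rfl fun j _ => by ring
  have hBl_smul_right : ∀ (t : ℝ) x y, Bl x (t • y) = t * Bl x y := by
    intro t x y
    rw [hBl, Finset.mul_sum]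
    refine Finset.sum_congr rfl fun i _ => ?_
    rw [Finset.mul_sum]
    exact Finset.sum_congr rfl fun j _ => by simp [Pi.smul_apply]; ring
  have hBl_add_right : ∀ x y y', Bl x (y + y') = Bl x y + Bl x y' := by
    intro x y y'
    simp only [hBl, Pi.add_apply, ← Finset.sum_add_distrib]
    exact Finset.sum_congr rfl fun i _ => Finset.sum_congr rfl fun j _ => by ring
  have hBl_zero_right : ∀ x, Bl x 0 = 0 := by
    intro x; simp [hBl]
  have hBl_zero_left : ∀ y, Bl 0 y = 0 := by
    intro y; simp [hBl]
  have hBl_sum_right : ∀ (x : Fin d → ℝ) {α : Type} (s : Finset α) (f : α → (Fin d → ℝ)),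
      Bl x (∑ g ∈ s, f g) = ∑ g ∈ s, Bl x (f g) := by
    intro x α s f
    induction s using Finset.induction_on with
    | empty => simpa using hBl_zero_right x
    | insert _ _ hnotmem ih =>
      rw [Finset.sum_insert hnotmem, Finset.sum_insert hnotmem, hBl_add_right, ih]
  have hBl_sum_left : ∀ (y : Fin d → ℝ) {α : Type} (s : Finset α) (f : α → (Fin d → ℝ)),
      Bl (∑ g ∈ s, f g) y = ∑ g ∈ s, Bl (f g) y := by
    intro y α s f
    induction s using Finset.induction_on with
    | empty => simpa using hBl_zero_left y
    | insert _ _ hnotmem ih =>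
      rw [Finset.sum_insert hnotmem, Finset.sum_insert hnotmem, hBl_add_left, ih]
  have hq_sub : ∀ x y, q (x - y) = q x - Bl x y + q y := by
    intro x y
    have h1 : x - y = x + (-1 : ℝ) • y := by
      funext i; simp [Pi.smul_apply]; ring
    rw [h1, hq_expand, hBl_smul_right, hqsmul]
    ring
  have hF_sum : ∀ {α : Type} (s : Finset α) (f : α → (Fin d → ℝ)),
      F (∑ g ∈ s, f g) = ∑ g ∈ s, F (f g) := by
    intro α s f
    induction s using Finset.induction_on with
    | empty => simpa using hF0
    | insert _ _ hnotmem ih =>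
      rw [Finset.sum_insert hnotmem, Finset.sum_insert hnotmem, hFadd, ih]
  -- cone facts
  have hσ_smul : ∀ (t : ℝ), 0 ≤ t → ∀ v ∈ σ, t • v ∈ σ := by
    intro t ht v hv
    rw [hS] at hv ⊢
    obtain ⟨c, hc0, rfl⟩ := hv
    refine ⟨fun g => t * c g, fun g => mul_nonneg ht (hc0 g), ?_⟩
    rw [Finset.smul_sum]
    exact Finset.sum_congr rfl fun g _ => by rw [smul_smul]
  have hσ_add : ∀ v ∈ σ, ∀ w ∈ σ, v + w ∈ σ := by
    intro v hv w hw
    rw [hS] at hv hw ⊢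
    obtain ⟨c, hc0, rfl⟩ := hv
    obtain ⟨c', hc'0, rfl⟩ := hw
    refine ⟨fun g => c g + c' g, fun g => add_nonneg (hc0 g) (hc'0 g), ?_⟩
    rw [← Finset.sum_add_distrib]
    exact Finset.sum_congr rfl fun g _ => by rw [add_smul]
  have hσ_closed : IsClosed σ := by
    rw [hS]; exact cone_closed S
  -- dimension is positive
  rcases isEmpty_or_nonempty (Fin d) with hE | hd
  · exfalso
    rw [ha v₁] at hv₁F
    simp [Finset.univ_eq_empty] at hv₁F
  -- coercivity of q
  haveI : Nontrivial (Fin d → ℝ) := by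
    obtain ⟨i⟩ := hd
    exact ⟨0, Pi.single i 1, fun h => by
      have := congrFun h i
      simp [Pi.single_apply] at this⟩
  obtain ⟨u₀, hu₀mem, hu₀min⟩ := (isCompact_sphere (0 : Fin d → ℝ) 1).exists_isMinOn
    (NormedSpace.sphere_nonempty.2 zero_le_one) hqcont.continuousOn
  have hu₀norm : ‖u₀‖ = 1 := by simpa using hu₀mem
  set ε := q u₀ with hεdef
  have hε0 : 0 < ε := hqpos u₀ (by intro h; rw [h] at hu₀norm; simp at hu₀norm)
  have hcoer : ∀ v : Fin d → ℝ, ε * ‖v‖ ^ 2 ≤ q v := by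
    intro v
    by_cases hv : v = 0
    · simp [hv, hq0]
    · have hnv : (0:ℝ) < ‖v‖ := norm_pos_iff.2 hv
      have hu : (‖v‖⁻¹ • v) ∈ Metric.sphere (0 : Fin d → ℝ) 1 := by
        simp [norm_smul, abs_of_pos (inv_pos.2 hnv), inv_mul_cancel₀ hnv.ne']
      have h1 : ε ≤ q (‖v‖⁻¹ • v) := hu₀min hu
      rw [hqsmul] at h1
      have h2 : (‖v‖⁻¹) ^ 2 = (‖v‖ ^ 2)⁻¹ := by
        rw [inv_pow]
      rw [h2] at h1
      have h3 : (0:ℝ) < ‖v‖ ^ 2 := by positivity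
      calc ε * ‖v‖ ^ 2 ≤ ((‖v‖ ^ 2)⁻¹ * q v) * ‖v‖ ^ 2 :=
            mul_le_mul_of_nonneg_right h1 h3.le
        _ = q v := by field_simp
  -- the slice P
  set P : Set (Fin d → ℝ) := σ ∩ F ⁻¹' {(-1 : ℝ)} with hPdef
  have hP_closed : IsClosed P := hσ_closed.inter (isClosed_singleton.preimage hFcont)
  have hv₁F' : (0:ℝ) < -F v₁ := by linarith
  set v₁' : Fin d → ℝ := (-F v₁)⁻¹ • v₁ with hv₁'def
  have hv₁'P : v₁' ∈ P := by
    constructor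
    · exact hσ_smul _ (inv_nonneg.2 hv₁F'.le) v₁ hv₁σ
    · show F v₁' = -1
      rw [hv₁'def, hFsmul]
      field_simp
      rw [div_self hv₁F.ne]
  -- scaling into P
  have hscaleP : ∀ v ∈ σ, F v < 0 → ((-F v)⁻¹ • v ∈ P ∧ v = (-F v) • ((-F v)⁻¹ • v)) := by
    intro v hv hFv
    have h0 : (0:ℝ) < -F v := by linarith
    refine ⟨⟨hσ_smul _ (inv_nonneg.2 h0.le) v hv, ?_⟩, ?_⟩
    · show F ((-F v)⁻¹ • v) = -1
      rw [hFsmul]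
      field_simp
      rw [div_self hFv.ne]
    · rw [smul_smul, mul_inv_cancel₀ h0.ne', one_smul]
  -- existence of minimizer of q on P
  set R := Real.sqrt (q v₁' / ε) with hRdef
  have hv₁'ball : v₁' ∈ Metric.closedBall (0 : Fin d → ℝ) R := by
    rw [Metric.mem_closedBall, dist_zero_right]
    rw [hRdef]
    rw [show ‖v₁'‖ = Real.sqrt (‖v₁'‖ ^ 2) by rw [Real.sqrt_sq (norm_nonneg _)]]
    apply Real.sqrt_le_sqrt
    rw [le_div_iff₀ hε0]
    linarith [hcoer v₁']
  have hKcompact : IsCompact (P ∩ Metric.closedBall (0 : Fin d → ℝ) R) :=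
    (isCompact_closedBall _ _).inter_left hP_closed
  obtain ⟨vstar, hvstarK, hvstarmin⟩ := hKcompact.exists_isMinOn ⟨v₁', hv₁'P, hv₁'ball⟩
    hqcont.continuousOn
  have hminP : ∀ w ∈ P, q vstar ≤ q w := by
    intro w hw
    by_cases hwball : w ∈ Metric.closedBall (0 : Fin d → ℝ) R
    · exact hvstarmin ⟨hw, hwball⟩
    · have h1 : R < ‖w‖ := by
        rw [Metric.mem_closedBall, dist_zero_right] at hwball
        linarith [not_le.1 hwball]
      have hR0 : 0 ≤ R := Real.sqrt_nonneg _
      have h2 : R ^ 2 ≤ ‖w‖ ^ 2 := by nlinarith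
      have h3 : R ^ 2 = q v₁' / ε := Real.sq_sqrt (div_nonneg (hqnonneg v₁') hε0.le)
      have h4 : q v₁' ≤ ε * ‖w‖ ^ 2 := by
        rw [h3] at h2
        calc q v₁' = ε * (q v₁' / ε) := by field_simp
          _ ≤ ε * ‖w‖ ^ 2 := mul_le_mul_of_nonneg_left h2 hε0.le
      calc q vstar ≤ q v₁' := hvstarmin ⟨hv₁'P, hv₁'ball⟩
        _ ≤ ε * ‖w‖ ^ 2 := h4
        _ ≤ q w := hcoer w
  have hvstarP : vstar ∈ P := hvstarK.1
  have hvstarσ : vstar ∈ σ := hvstarP.1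
  have hvstarF : F vstar = -1 := hvstarP.2
  have hvstar0 : vstar ≠ 0 := by
    intro h
    rw [h, hF0] at hvstarF
    norm_num at hvstarF
  have hqvstar : 0 < q vstar := hqpos vstar hvstar0
  -- uniqueness of the minimizer on P
  have hPuniq : ∀ w ∈ P, q w = q vstar → w = vstar := by
    intro w hw hqw
    by_contra hne
    have hz : ((1:ℝ)/2) • (w + vstar) ∈ P := by
      constructor
      · exact hσ_smul _ (by norm_num) _ (hσ_add w hw.1 vstar hvstarσ)
      · show F (((1:ℝ)/2) • (w + vstar)) = -1
        rw [hFsmul, hFadd, hw.2, hvstarF]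
        norm_num
    have h1 : q vstar ≤ q (((1:ℝ)/2) • (w + vstar)) := hminP _ hz
    rw [hqsmul, hq_expand] at h1
    have h2 : 0 < q (w - vstar) := hqpos _ (sub_ne_zero.2 hne)
    rw [hq_sub] at h2
    nlinarith
  -- representation of vstar in the cone
  obtain ⟨cs, hcs0, hcsrep⟩ : ∃ c : (Fin d → ℚ) → ℝ, (∀ g, 0 ≤ c g) ∧
      vstar = ∑ g ∈ S, c g • (fun i => ((g i : ℚ) : ℝ)) := by
    rw [hS] at hvstarσ; exact hvstarσ
  set rc : (Fin d → ℚ) → (Fin d → ℝ) := fun g => (fun i => ((g i : ℚ) : ℝ)) with hrc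
  set T : Finset (Fin d → ℚ) := S.filter (fun g => cs g ≠ 0) with hT
  have hTsub : T ⊆ S := Finset.filter_subset _ _
  have hrepT : vstar = ∑ g ∈ T, cs g • rc g := by
    rw [hcsrep, hT]
    symm
    apply Finset.sum_filter_of_ne
    intro g _ hne
    intro hcg
    exact hne (by rw [hcg, zero_smul])
  have hcpos : ∀ g ∈ T, 0 < cs g :=
    fun g hg => lt_of_le_of_ne (hcs0 g) (Ne.symm (Finset.mem_filter.1 hg).2)
  set l : (Fin d → ℚ) → ℚ := fun g => ∑ i, a i * g i with hl
  have hFrc : ∀ g, F (rc g) = ((l g : ℚ) : ℝ) := by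
    intro g
    rw [ha, hl]
    push_cast
    rfl
  have hFsumT : ∑ g ∈ T, cs g * ((l g : ℚ) : ℝ) = -1 := by
    have h0 := hvstarF
    rw [hrepT, hF_sum] at h0
    rw [← h0]
    exact Finset.sum_congr rfl fun g _ => by rw [hFsmul, hFrc]
  obtain ⟨g₀, hg₀T, hg₀l⟩ : ∃ g ∈ T, l g ≠ 0 := by
    by_contra hcon
    push_neg at hcon
    have : ∑ g ∈ T, cs g * ((l g : ℚ) : ℝ) = 0 :=
      Finset.sum_eq_zero fun g hg => by rw [hcon g hg]; simp
    rw [hFsumT] at this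
    norm_num at this
  have hg₀S : g₀ ∈ S := hTsub hg₀T
  have hg₀R : ((l g₀ : ℚ) : ℝ) ≠ 0 := Rat.cast_ne_zero.2 hg₀l
  set w0 : Fin d → ℚ := (-(l g₀)⁻¹) • g₀ with hw0
  have hrcw0 : rc w0 = (-((l g₀ : ℚ) : ℝ)⁻¹) • rc g₀ := by
    funext i
    simp only [hrc, hw0, Pi.smul_apply, smul_eq_mul]
    push_cast
    ring
  set zq : (Fin d → ℚ) → (Fin d → ℚ) := fun g => l g₀ • g - l g • g₀ with hzq
  have hrcz : ∀ g, rc (zq g) = ((l g₀ : ℚ) : ℝ) • rc g - ((l g : ℚ) : ℝ) • rc g₀ := by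
    intro g
    funext i
    simp only [hrc, hzq, Pi.sub_apply, Pi.smul_apply, smul_eq_mul]
    push_cast
    ring
  have hF_sub : ∀ x y, F (x - y) = F x - F y := by
    intro x y
    have hxy : x - y = x + (-1 : ℝ) • y := by funext i; simp [Pi.smul_apply]; ring
    rw [hxy, hFadd, hFsmul]
    ring
  have hFz : ∀ g, F (rc (zq g)) = 0 := by
    intro g
    rw [hrcz g, hF_sub, hFsmul, hFsmul, hFrc, hFrc]
    ring
  -- perpendicularity at the minimizer
  have hperp : ∀ g ∈ T, Bl vstar (rc (zq g)) = 0 := by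
    intro g hgT
    by_cases hgg : g = g₀
    · have hz0 : rc (zq g) = 0 := by
        rw [hrcz g, hgg]
        funext i
        simp
      rw [hz0, hBl_zero_right]
    have hgS : g ∈ S := hTsub hgT
    set m : ℝ := min (cs g) (cs g₀) with hm
    have hm0 : 0 < m := lt_min (hcpos g hgT) (hcpos g₀ hg₀T)
    set Kc : ℝ := |((l g₀ : ℚ) : ℝ)| + |((l g : ℚ) : ℝ)| + 1 with hKc
    have hKc0 : 0 < Kc := by positivity
    set δ := m / Kc with hδ
    have hδ0 : 0 < δ := div_pos hm0 hKc0
    have hδKc : δ * Kc = m := div_mul_cancel₀ _ hKc0.ne'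
    have hmem : ∀ t : ℝ, |t| ≤ δ → vstar + t • rc (zq g) ∈ P := by
      intro t ht
      have habs1 : |t * ((l g₀ : ℚ) : ℝ)| ≤ m := by
        rw [abs_mul]
        calc |t| * |((l g₀ : ℚ) : ℝ)| ≤ δ * Kc := by
              apply mul_le_mul ht _ (abs_nonneg _) hδ0.le
              rw [hKc]
              have := abs_nonneg ((l g : ℚ) : ℝ)
              linarith
          _ = m := hδKc
      have habs2 : |t * ((l g : ℚ) : ℝ)| ≤ m := by
        rw [abs_mul]
        calc |t| * |((l g : ℚ) : ℝ)| ≤ δ * Kc := by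
              apply mul_le_mul ht _ (abs_nonneg _) hδ0.le
              rw [hKc]
              have := abs_nonneg ((l g₀ : ℚ) : ℝ)
              linarith
          _ = m := hδKc
      constructor
      · rw [hS]
        refine ⟨fun h => cs h + (if h = g then t * ((l g₀ : ℚ) : ℝ) else 0)
            + (if h = g₀ then -(t * ((l g : ℚ) : ℝ)) else 0), ?_, ?_⟩
        · intro h
          show 0 ≤ (cs h + if h = g then t * ((l g₀ : ℚ) : ℝ) else 0)
              + if h = g₀ then -(t * ((l g : ℚ) : ℝ)) else 0
          by_cases h1 : h = g
          · have h2 : h ≠ g₀ := by rw [h1]; exact hgg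
            rw [if_pos h1, if_neg h2]
            have hmg : m ≤ cs h := by rw [h1]; exact min_le_left _ _
            have := neg_abs_le (t * ((l g₀ : ℚ) : ℝ))
            linarith
          · by_cases h2 : h = g₀
            · rw [if_neg h1, if_pos h2]
              have hmg : m ≤ cs h := by rw [h2]; exact min_le_right _ _
              have h3 : -(t * ((l g : ℚ) : ℝ)) ≥ -m := by
                have := le_abs_self (t * ((l g : ℚ) : ℝ))
                linarith
              linarith
            · rw [if_neg h1, if_neg h2]
              have := hcs0 h
              linarith
        · have hsplit : ∀ h : Fin d → ℚ,
              (cs h + (if h = g then t * ((l g₀ : ℚ) : ℝ) else 0)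
                + (if h = g₀ then -(t * ((l g : ℚ) : ℝ)) else 0)) • rc h
              = cs h • rc h + (if h = g then (t * ((l g₀ : ℚ) : ℝ)) • rc h else 0)
                + (if h = g₀ then (-(t * ((l g : ℚ) : ℝ))) • rc h else 0) := by
            intro h
            rw [add_smul, add_smul]
            congr 1
            · congr 1
              split_ifs <;> simp
            · split_ifs <;> simp
          rw [Finset.sum_congr rfl (fun h _ => hsplit h), Finset.sum_add_distrib,
            Finset.sum_add_distrib, Finset.sum_ite_eq' S g, Finset.sum_ite_eq' S g₀,
            if_pos hgS, if_pos hg₀S, ← hcsrep, hrcz g]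
          module
      · show F (vstar + t • rc (zq g)) = -1
        rw [hFadd, hFsmul, hFz g, hvstarF]
        ring
    have hineq : ∀ t : ℝ, |t| ≤ δ →
        0 ≤ t * Bl vstar (rc (zq g)) + t ^ 2 * q (rc (zq g)) := by
      intro t ht
      have h1 := hminP _ (hmem t ht)
      rw [hq_expand, hBl_smul_right, hqsmul] at h1
      linarith
    exact key_quad hδ0 (hqnonneg _) hineq
  -- explicit affine decomposition of vstar
  set sco : (Fin d → ℚ) → ℝ :=
    fun g => (cs g + (if g = g₀ then ((l g₀ : ℚ) : ℝ)⁻¹ else 0)) / ((l g₀ : ℚ) : ℝ) with hsco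
  have hsrep : vstar = rc w0 + ∑ g ∈ T, sco g • rc (zq g) := by
    have h1 : ∀ g ∈ T, sco g • rc (zq g)
        = (cs g • rc g + (if g = g₀ then ((l g₀ : ℚ) : ℝ)⁻¹ • rc g₀ else 0))
          - (sco g * ((l g : ℚ) : ℝ)) • rc g₀ := by
      intro g hg
      rw [hrcz g, smul_sub, smul_smul, smul_smul]
      congr 1
      have h2 : sco g * ((l g₀ : ℚ) : ℝ) = cs g + (if g = g₀ then ((l g₀ : ℚ) : ℝ)⁻¹ else 0) := by
        rw [hsco]
        field_simp
      rw [h2, add_smul]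
      congr 1
      split_ifs with hgg
      · subst hgg; rfl
      · simp
    rw [Finset.sum_congr rfl h1, Finset.sum_sub_distrib, Finset.sum_add_distrib]
    rw [Finset.sum_ite_eq' T g₀, if_pos hg₀T, ← hrepT]
    have h3 : ∑ g ∈ T, (sco g * ((l g : ℚ) : ℝ)) • rc g₀
        = (∑ g ∈ T, sco g * ((l g : ℚ) : ℝ)) • rc g₀ := by
      rw [Finset.sum_smul]
    have h4 : ∑ g ∈ T, sco g * ((l g : ℚ) : ℝ) = 0 := by
      have h5 : ∀ g ∈ T, sco g * ((l g : ℚ) : ℝ)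
          = cs g * ((l g : ℚ) : ℝ) / ((l g₀ : ℚ) : ℝ)
            + (if g = g₀ then ((l g₀ : ℚ) : ℝ)⁻¹ * ((l g : ℚ) : ℝ) / ((l g₀ : ℚ) : ℝ) else 0) := by
        intro g hg
        by_cases hgg : g = g₀
        · subst hgg
          simp only [hsco, if_pos rfl]
          field_simp
        · simp only [hsco, if_neg hgg]
          field_simp
          ring
      rw [Finset.sum_congr rfl h5, Finset.sum_add_distrib, ← Finset.sum_div, hFsumT]
      rw [Finset.sum_ite_eq' T g₀, if_pos hg₀T]
      field_simp
      ring
    rw [h3, h4, zero_smul, hrcw0]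
    module
  -- rational bilinear values
  set Bq : (Fin d → ℚ) → (Fin d → ℚ) → ℚ :=
    fun x y => ∑ i, ∑ j, A i j * (x i * y j + y i * x j) with hBqdef
  have hBlrc : ∀ x y, Bl (rc x) (rc y) = ((Bq x y : ℚ) : ℝ) := by
    intro x y
    simp only [hBl, hBqdef, hrc]
    push_cast
    rfl
  -- uniqueness of the solution of the linear system
  have hsol_unique : ∀ x : Fin d → ℝ,
      (∃ tt : (Fin d → ℚ) → ℝ, x = rc w0 + ∑ g ∈ T, tt g • rc (zq g)) →
      (∀ g ∈ T, Bl x (rc (zq g)) = 0) → x = vstar := by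
    rintro x ⟨tt, httrep⟩ hxperp
    have hdiff : x - vstar = ∑ g ∈ T, (tt g - sco g) • rc (zq g) := by
      rw [httrep]
      nth_rewrite 1 [hsrep]
      rw [Finset.sum_congr rfl (fun g _ => sub_smul (tt g) (sco g) (rc (zq g))),
        Finset.sum_sub_distrib]
      abel
    have hBd : ∀ g ∈ T, Bl (x - vstar) (rc (zq g)) = 0 := by
      intro g hg
      have hsub : x - vstar = x + (-1 : ℝ) • vstar := by
        funext i; simp [Pi.smul_apply]; ring
      rw [hsub, hBl_add_left, hBl_smul_left, hxperp g hg, hperp g hg]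
      ring
    have hBdd : Bl (x - vstar) (x - vstar) = 0 := by
      nth_rewrite 2 [hdiff]
      rw [hBl_sum_right]
      refine Finset.sum_eq_zero fun g hg => ?_
      rw [hBl_smul_right, hBd g hg, mul_zero]
    have hq2 : q (x - vstar) = 0 := by
      have h6 := hq_expand (x - vstar) (x - vstar)
      have h7 : (x - vstar) + (x - vstar) = (2 : ℝ) • (x - vstar) := by
        funext i; simp; ring
      rw [h7, hqsmul, hBdd] at h6
      nlinarith [h6]
    have h8 : x - vstar = 0 := by
      by_contra hne
      exact (hqpos _ hne).ne' hq2
    exact sub_eq_zero.1 h8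
  -- the real solution of the rational linear system
  have hrealsol : ∀ h ∈ T, ∑ g ∈ T, ((Bq (zq g) (zq h) : ℚ) : ℝ) * sco g
      = ((-Bq w0 (zq h) : ℚ) : ℝ) := by
    intro h hh
    have h1 := hperp h hh
    rw [hsrep, hBl_add_left, hBl_sum_left] at h1
    have h2 : ∀ g ∈ T, Bl (sco g • rc (zq g)) (rc (zq h))
        = ((Bq (zq g) (zq h) : ℚ) : ℝ) * sco g := by
      intro g hg
      rw [hBl_smul_left, hBlrc]
      ring
    rw [Finset.sum_congr rfl h2, hBlrc] at h1
    push_cast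
    linarith
  -- apply rational solvability
  have hx : ∀ h : {g // g ∈ T}, ∑ g : {g // g ∈ T},
      ((Bq (zq g.1) (zq h.1) : ℚ) : ℝ) * sco g.1 = ((-Bq w0 (zq h.1) : ℚ) : ℝ) := by
    intro h
    have h3 := hrealsol h.1 h.2
    rw [Finset.sum_subtype T (fun x => Iff.rfl)
      (fun g => ((Bq (zq g) (zq h.1) : ℚ) : ℝ) * sco g)] at h3
    exact h3
  obtain ⟨tt, htt⟩ := rat_solution (fun h g : {g // g ∈ T} => Bq (zq g.1) (zq h.1))
    (fun h => -Bq w0 (zq h.1)) (fun g => sco g.1) hx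
  set tq : (Fin d → ℚ) → ℚ := fun g => if hg : g ∈ T then tt ⟨g, hg⟩ else 0 with htqdef
  set v0 : Fin d → ℚ := w0 + ∑ g ∈ T, tq g • zq g with hv0def
  have hrcv0 : rc v0 = rc w0 + ∑ g ∈ T, ((tq g : ℚ) : ℝ) • rc (zq g) := by
    funext i
    simp only [hrc, hv0def, Pi.add_apply, Finset.sum_apply, Pi.smul_apply, smul_eq_mul]
    push_cast
    rfl
  have htq_sum : ∀ h ∈ T, ∑ g ∈ T, tq g * Bq (zq g) (zq h) = -Bq w0 (zq h) := by
    intro h hh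
    have h4 := htt ⟨h, hh⟩
    rw [Finset.sum_subtype T (fun x => Iff.rfl) (fun g => tq g * Bq (zq g) (zq h))]
    rw [← h4]
    refine Finset.sum_congr rfl fun g _ => ?_
    have h5 : tq g.1 = tt g := by
      simp only [htqdef]
      rw [dif_pos g.2]
    rw [h5]
    ring
  have hv0perp : ∀ h ∈ T, Bl (rc v0) (rc (zq h)) = 0 := by
    intro h hh
    rw [hrcv0, hBl_add_left, hBl_sum_left]
    have e : ∀ g ∈ T, Bl (((tq g : ℚ) : ℝ) • rc (zq g)) (rc (zq h))
        = ((tq g * Bq (zq g) (zq h) : ℚ) : ℝ) := by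
      intro g hg
      rw [hBl_smul_left, hBlrc]
      push_cast
      ring
    rw [Finset.sum_congr rfl e, hBlrc, ← Rat.cast_sum, htq_sum h hh]
    push_cast
    ring
  have hv0eq : rc v0 = vstar :=
    hsol_unique (rc v0) ⟨fun g => ((tq g : ℚ) : ℝ), hrcv0⟩ hv0perp
  -- main inequality
  have hsqstar : 0 < Real.sqrt (q vstar) := Real.sqrt_pos.2 hqvstar
  have hratio : ∀ v ∈ σ, F v < 0 →
      F v / Real.sqrt (q v) = -1 / Real.sqrt (q ((-F v)⁻¹ • v)) := by
    intro v hv hFv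
    have h0 : (0 : ℝ) < -F v := by linarith
    have hv0' : v ≠ 0 := by
      intro h
      rw [h, hF0] at hFv
      norm_num at hFv
    have hqv : 0 < q v := hqpos v hv0'
    have hsq : 0 < Real.sqrt (q v) := Real.sqrt_pos.2 hqv
    have hqw_eq : q ((-F v)⁻¹ • v) = ((-F v)⁻¹) ^ 2 * q v := hqsmul _ _
    have hsqw : Real.sqrt (q ((-F v)⁻¹ • v)) = (-F v)⁻¹ * Real.sqrt (q v) := by
      rw [hqw_eq, Real.sqrt_mul (by positivity), Real.sqrt_sq (by positivity)]
    rw [hsqw]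
    field_simp
  have hmain : ∀ v ∈ σ, v ≠ 0 → F vstar / Real.sqrt (q vstar) ≤ F v / Real.sqrt (q v) := by
    intro v hv hv0'
    have hqv : 0 < q v := hqpos v hv0'
    have hsq : 0 < Real.sqrt (q v) := Real.sqrt_pos.2 hqv
    rcases lt_or_ge (F v) 0 with hFv | hFv
    · obtain ⟨hwP, hwdec⟩ := hscaleP v hv hFv
      have hqw : q vstar ≤ q ((-F v)⁻¹ • v) := hminP _ hwP
      have hsqle : Real.sqrt (q vstar) ≤ Real.sqrt (q ((-F v)⁻¹ • v)) := Real.sqrt_le_sqrt hqw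
      have hsqw0 : 0 < Real.sqrt (q ((-F v)⁻¹ • v)) :=
        Real.sqrt_pos.2 (lt_of_lt_of_le hqvstar hqw)
      rw [hvstarF, hratio v hv hFv]
      have h9 : 1 / Real.sqrt (q ((-F v)⁻¹ • v)) ≤ 1 / Real.sqrt (q vstar) :=
        one_div_le_one_div_of_le hsqstar hsqle
      calc (-1 : ℝ) / Real.sqrt (q vstar) = -(1 / Real.sqrt (q vstar)) := by ring
        _ ≤ -(1 / Real.sqrt (q ((-F v)⁻¹ • v))) := by linarith
        _ = -1 / Real.sqrt (q ((-F v)⁻¹ • v)) := by ring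
    · have h1 : 0 ≤ F v / Real.sqrt (q v) := div_nonneg hFv hsq.le
      have h2 : F vstar / Real.sqrt (q vstar) < 0 := by
        rw [hvstarF]
        exact div_neg_of_neg_of_pos (by norm_num) hsqstar
      linarith
  -- equality case
  have hequal : ∀ v ∈ σ, v ≠ 0 →
      F v / Real.sqrt (q v) = F vstar / Real.sqrt (q vstar) →
      ∃ c : ℝ, 0 < c ∧ v = c • vstar := by
    intro v hv hv0' heq
    have hqv : 0 < q v := hqpos v hv0'
    have hsq : 0 < Real.sqrt (q v) := Real.sqrt_pos.2 hqv
    have hFv : F v < 0 := by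
      by_contra hcon
      push_neg at hcon
      have h1 : 0 ≤ F v / Real.sqrt (q v) := div_nonneg hcon hsq.le
      rw [heq, hvstarF] at h1
      have h2 : (-1 : ℝ) / Real.sqrt (q vstar) < 0 :=
        div_neg_of_neg_of_pos (by norm_num) hsqstar
      linarith
    obtain ⟨hwP, hwdec⟩ := hscaleP v hv hFv
    have h0 : (0 : ℝ) < -F v := by linarith
    have heq2 : (-1 : ℝ) / Real.sqrt (q ((-F v)⁻¹ • v)) = -1 / Real.sqrt (q vstar) := by
      rw [← hratio v hv hFv, heq, hvstarF]
    have hsqw0 : 0 < Real.sqrt (q ((-F v)⁻¹ • v)) :=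
      Real.sqrt_pos.2 (lt_of_lt_of_le hqvstar (hminP _ hwP))
    have hsqeq : Real.sqrt (q ((-F v)⁻¹ • v)) = Real.sqrt (q vstar) := by
      rw [div_eq_div_iff hsqw0.ne' hsqstar.ne'] at heq2
      linarith
    have hqeq : q ((-F v)⁻¹ • v) = q vstar := by
      have h3 := congrArg (fun r : ℝ => r ^ 2) hsqeq
      simp only [Real.sq_sqrt (hqnonneg _)] at h3
      exact h3
    have hweq : (-F v)⁻¹ • v = vstar := hPuniq _ hwP hqeq
    refine ⟨-F v, h0, ?_⟩
    rw [← hweq]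
    exact hwdec
  -- conclusion
  have hv0cast : (fun i => ((v0 i : ℚ) : ℝ)) = vstar := hv0eq
  refine ⟨v0, ?_, ?_, ?_, ?_⟩
  · rw [hv0cast]
    exact hvstarσ
  · rw [hv0cast]
    exact hvstar0
  · intro v hv hvne
    rw [hv0cast]
    exact hmain v hv hvne
  · intro v hv hvne heq
    rw [hv0cast] at heq ⊢
    exact hequal v hv hvne heq
end

section
/- Let W be a finite dimensional vector space with two decreasing exhaustive ℤ-filtrations F^• and G^•. If gr^{p,q} W := (F^p W ∩ G^q W)/(F^{p+1} W ∩ G^q W + F^p W ∩ G^{q+1} W) vanishes for all (p,q) with p ≠ q, then the two filtrations coincide: F^p W = G^p W for all p ∈ ℤ. -/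
/-- The bigraded piece
`gr^{p,q} W = (F^p W ∩ G^q W)/(F^{p+1} W ∩ G^q W + F^p W ∩ G^{q+1} W)`. -/
abbrev grPQ {k W : Type*} [Field k] [AddCommGroup W] [Module k W]
    (F G : ℤ → Submodule k W) (p q : ℤ) :=
  ↥(F p ⊓ G q) ⧸
    (Submodule.comap (F p ⊓ G q).subtype (F (p + 1) ⊓ G q ⊔ F p ⊓ G (q + 1)))

/-- Key one-sided lemma: if `F` is eventually `⊥`, `G` is eventually `⊤`, and the
bigraded vanishing inequality holds, then `F p ≤ G p`. -/
theorem keyLe {k W : Type*} [Field k] [AddCommGroup W] [Module k W]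
    (F G : ℤ → Submodule k W)
    (p₁ : ℤ) (hFbot : ∀ p, p₁ ≤ p → F p = ⊥)
    (q₀ : ℤ) (hGtop : ∀ q ≤ q₀, G q = ⊤)
    (hv : ∀ p q : ℤ, p ≠ q → F p ⊓ G q ≤ F (p+1) ⊓ G q ⊔ F p ⊓ G (q+1)) :
    ∀ p, F p ≤ G p := by
  have claim1 : ∀ n : ℕ, ∀ p q : ℤ, q < p → p₁ - p ≤ n → F p ⊓ G q ≤ G (q+1) := by
    intro n
    induction n with
    | zero =>
      intro p q hq hn
      rw [hFbot p (by omega)]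
      simp
    | succ n ih =>
      intro p q hq hn
      by_cases hp : p₁ ≤ p
      · rw [hFbot p hp]; simp
      · refine le_trans (hv p q (by omega)) (sup_le ?_ inf_le_right)
        exact ih (p+1) q (by omega) (by omega)
  have claim1' : ∀ p q : ℤ, q < p → F p ⊓ G q ≤ G (q+1) := fun p q hq =>
    claim1 (p₁ - p).toNat p q hq (by omega)
  have claim2 : ∀ m : ℕ, ∀ p : ℤ, F p ⊓ G (p - m) ≤ G p := by
    intro m
    induction m with
    | zero => intro p; simpa using inf_le_right
    | succ m ih =>
      intro p
      have h1 : F p ⊓ G (p - (m + 1 : ℕ)) ≤ G (p - m) := by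
        have h := claim1' p (p - (m + 1 : ℕ)) (by push_cast; omega)
        have he : (p - ((m : ℤ) + 1)) + 1 = p - m := by ring
        push_cast at h ⊢
        rwa [he] at h
      exact le_trans (le_inf inf_le_left h1) (ih p)
  intro p
  have h := claim2 (p - q₀).toNat p
  rwa [hGtop _ (by omega), inf_top_eq] at h

/-- If `W` is a finite dimensional vector space with two decreasing exhaustive
`ℤ`-filtrations `F^•`, `G^•` such that `gr^{p,q} W = 0` whenever `p ≠ q`, then the two
filtrations coincide. -/
theorem stmt6 {k W : Type*} [Field k] [AddCommGroup W] [Module k W]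
    [FiniteDimensional k W]
    (F G : ℤ → Submodule k W) (hFanti : Antitone F) (hGanti : Antitone G)
    (hFtop : ∃ p₀ : ℤ, ∀ p ≤ p₀, F p = ⊤) (hFbot : ∃ p₁ : ℤ, ∀ p, p₁ ≤ p → F p = ⊥)
    (hGtop : ∃ q₀ : ℤ, ∀ q ≤ q₀, G q = ⊤) (hGbot : ∃ q₁ : ℤ, ∀ q, q₁ ≤ q → G q = ⊥)
    (hvanish : ∀ p q : ℤ, p ≠ q → Subsingleton (grPQ F G p q)) :
    ∀ p : ℤ, F p = G p := by
  obtain ⟨p₁, hFbot⟩ := hFbot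
  obtain ⟨q₁, hGbot⟩ := hGbot
  obtain ⟨p₀, hFtop⟩ := hFtop
  obtain ⟨q₀, hGtop⟩ := hGtop
  have hv : ∀ p q : ℤ, p ≠ q → F p ⊓ G q ≤ F (p+1) ⊓ G q ⊔ F p ⊓ G (q+1) := by
    intro p q hpq
    have h := hvanish p q hpq
    rwa [Submodule.Quotient.subsingleton_iff,
      Submodule.comap_subtype_eq_top] at h
  intro p
  refine le_antisymm (keyLe F G p₁ hFbot q₀ hGtop hv p)
    (keyLe G F q₁ hGbot p₀ hFtop (fun p q h => ?_) p)
  have h2 := hv q p h.symm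
  rwa [inf_comm (F q), inf_comm (F (q+1)), inf_comm (F q), sup_comm] at h2
end
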